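/- arXiv:1705.03376 — 10 statements merged into one kernel-verified Lean document; each statement's English description precedes it below -/
import Mathlib

section
/- Let x, y ∈ ℝ^d with x ≺ y (majorization). If φ is strictly convex on an interval containing the entries of x and y and ∑_i φ(x_i) = ∑_i φ(y_i), then x↓ = y↓. -/
noncomputable def decr {n : ℕ} (x : Fin n → ℝ) : Fin n → ℝ :=
  fun i => x (Tuple.sort x i.rev)

noncomputable def psum {n : ℕ} (x : Fin n → ℝ) (k : ℕ) : ℝ :=
  ∑ i ∈ Finset.univ.filter (fun i : Fin n => (i : ℕ) < k), x i

/-- `x` is submajorized by `y` : partial sums of the non-increasing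
rearrangement of `x` are dominated by those of `y`. -/
def SubMaj {n d : ℕ} (x : Fin n → ℝ) (y : Fin d → ℝ) : Prop :=
  ∀ k : ℕ, psum (decr x) k ≤ psum (decr y) k

/-- majorization (allowing different lengths). -/
def Maj {n d : ℕ} (x : Fin n → ℝ) (y : Fin d → ℝ) : Prop :=
  SubMaj x y ∧ (∑ i, x i) = (∑ i, y i)

/-- `γ` is the water-filling of `α` in dimension `d`, with water-level `c`. -/
def IsWaterFilling {n : ℕ} (d : ℕ) (hd0 : 0 < d) (hd : d ≤ n)
    (α : Fin n → ℝ) (c : ℝ) (γ : Fin d → ℝ) : Prop :=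
  α ⟨d - 1, by omega⟩ ≤ c ∧
  (∑ i : Fin d, max (α (Fin.castLE hd i)) c) = (∑ i, α i) ∧
  ∀ i : Fin d, γ i = max (α (Fin.castLE hd i)) c

namespace MajAux

/-- slope of `φ` between `p` and `q`. -/
noncomputable def msl (φ : ℝ → ℝ) (p q : ℝ) : ℝ := (φ q - φ p) / (q - p)

lemma msl_symm (φ : ℝ → ℝ) (p q : ℝ) : msl φ p q = msl φ q p := by
  unfold msl
  rw [← neg_div_neg_eq]
  ring_nf

lemma msl_spec (φ : ℝ → ℝ) {p q : ℝ} (h : p ≠ q) :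
    msl φ p q * (q - p) = φ q - φ p :=
  div_mul_cancel₀ _ (sub_ne_zero.mpr (Ne.symm h))

lemma msl_mono {I : Set ℝ} {φ : ℝ → ℝ} (hφ : ConvexOn ℝ I φ)
    {p' q' p q : ℝ} (hp' : p' ∈ I) (hq' : q' ∈ I) (hp : p ∈ I) (hq : q ∈ I)
    (hne' : p' ≠ q') (hne : p ≠ q) (h1 : p' ≤ p) (h2 : q' ≤ q) :
    msl φ p' q' ≤ msl φ p q := by
  rcases eq_or_ne q p' with rfl | hqp'
  · calc msl φ q q' = msl φ q' q := msl_symm φ q q'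
      _ = msl φ q q' := msl_symm φ q' q
      _ ≤ msl φ q p := hφ.secant_mono hq hq' hp hne'.symm hne (h2.trans h1)
      _ = msl φ p q := msl_symm φ q p
  · calc msl φ p' q' ≤ msl φ p' q := hφ.secant_mono hp' hq' hq hne'.symm hqp' h2
      _ = msl φ q p' := msl_symm φ p' q
      _ ≤ msl φ q p := hφ.secant_mono hq hp' hp hqp'.symm hne h1
      _ = msl φ p q := msl_symm φ q p

lemma msl_strict {I : Set ℝ} {φ : ℝ → ℝ} (hφ : StrictConvexOn ℝ I φ)
    {p' q' p q : ℝ} (hp' : p' ∈ I) (hq' : q' ∈ I) (hp : p ∈ I) (hq : q ∈ I)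
    (h1 : q' < p') (h2 : p' ≤ p) (h3 : p < q) :
    msl φ p' q' < msl φ p q := by
  have hq'q : q' < q := lt_trans (lt_of_lt_of_le h1 h2) h3
  calc msl φ p' q' = msl φ q' p' := msl_symm φ p' q'
    _ < msl φ q' q := hφ.secant_strict_mono hq' hp' hq (ne_of_gt h1) (ne_of_gt hq'q)
        (lt_of_le_of_lt h2 h3)
    _ = msl φ q q' := msl_symm φ q' q
    _ ≤ msl φ q p := hφ.convexOn.secant_mono hq hq' hp (ne_of_lt hq'q) (ne_of_lt h3)
        (le_of_lt (lt_of_lt_of_le h1 h2))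
    _ = msl φ p q := msl_symm φ q p

lemma decr_antitone {n : ℕ} (x : Fin n → ℝ) : Antitone (decr x) := by
  intro i j hij
  exact Tuple.monotone_sort x (Fin.rev_le_rev.mpr hij)

lemma decr_mem {n : ℕ} (x : Fin n → ℝ) {I : Set ℝ} (hx : ∀ i, x i ∈ I) (i : Fin n) :
    decr x i ∈ I := hx _

lemma sum_decr {n : ℕ} (x : Fin n → ℝ) (g : ℝ → ℝ) :
    ∑ i, g (decr x i) = ∑ i, g (x i) := by
  unfold decr
  have h1 : ∑ i : Fin n, g (x (Tuple.sort x i.rev)) = ∑ i : Fin n, g (x (Tuple.sort x i)) :=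
    Fintype.sum_equiv Fin.revPerm _ _ (fun i => by simp)
  have h2 : ∑ i : Fin n, g (x (Tuple.sort x i)) = ∑ i, g (x i) :=
    Fintype.sum_equiv (Tuple.sort x) _ _ (fun i => rfl)
  rw [h1, h2]

lemma psum_zero {n : ℕ} (a : Fin n → ℝ) : psum a 0 = 0 := by
  simp [psum]

lemma psum_succ {n : ℕ} (a : Fin n → ℝ) (t : ℕ) (ht : t < n) :
    psum a (t + 1) = psum a t + a ⟨t, ht⟩ := by
  unfold psum
  have : Finset.univ.filter (fun i : Fin n => (i : ℕ) < t + 1) =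
      insert ⟨t, ht⟩ (Finset.univ.filter (fun i : Fin n => (i : ℕ) < t)) := by
    ext i
    simp [Fin.ext_iff]
    omega
  rw [this, Finset.sum_insert (by simp)]
  ring

lemma psum_total {n : ℕ} (a : Fin n → ℝ) : psum a n = ∑ i, a i := by
  unfold psum
  rw [Finset.filter_true_of_mem (fun i _ => i.isLt)]

lemma abel_aux (c D : ℕ → ℝ) (hD0 : D 0 = 0) (m : ℕ) :
    ∑ t ∈ Finset.range (m + 1), c t * (D (t + 1) - D t)
      = (∑ t ∈ Finset.range m, (c t - c (t + 1)) * D (t + 1)) + c m * D (m + 1) := by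
  induction m with
  | zero => simp [hD0]
  | succ m ih =>
    rw [Finset.sum_range_succ, ih, Finset.sum_range_succ]
    ring

end MajAux

/-- If x ≺ y, φ is strictly convex on an interval containing all entries, and
∑ φ(xᵢ) = ∑ φ(yᵢ), then x↓ = y↓. -/
theorem stmt2 {d : ℕ} (x y : Fin d → ℝ) (I : Set ℝ) (φ : ℝ → ℝ)
    (hx : ∀ i, x i ∈ I) (hy : ∀ i, y i ∈ I)
    (hφ : StrictConvexOn ℝ I φ) (hmaj : Maj x y)
    (heq : (∑ i, φ (x i)) = ∑ i, φ (y i)) :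
    decr x = decr y := by
  classical
  by_contra hne
  have hex : ∃ i : Fin d, decr x i ≠ decr y i := by
    by_contra h
    push_neg at h
    exact hne (funext h)
  obtain ⟨i0, hi0⟩ := hex
  have hd0 : 0 < d := i0.pos
  obtain ⟨m, rfl⟩ : ∃ m, d = m + 1 := ⟨d - 1, by omega⟩
  -- integer-indexed versions of the rearranged sequences
  set a' : ℕ → ℝ := fun t => if h : t < m + 1 then decr x ⟨t, h⟩ else 0 with ha'
  set b' : ℕ → ℝ := fun t => if h : t < m + 1 then decr y ⟨t, h⟩ else 0 with hb'
  set D : ℕ → ℝ := fun k => psum (decr y) k - psum (decr x) k with hD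
  have hDnonneg : ∀ k, 0 ≤ D k := fun k => sub_nonneg.mpr (hmaj.1 k)
  have hD0 : D 0 = 0 := by simp [hD, MajAux.psum_zero]
  have hsum_ab : ∑ i, decr x i = ∑ i, decr y i := by
    have h1 := MajAux.sum_decr x (fun r => r)
    have h2 := MajAux.sum_decr y (fun r => r)
    rw [h1, h2]
    exact hmaj.2
  have hDtot : D (m + 1) = 0 := by
    simp only [hD, MajAux.psum_total]
    rw [hsum_ab, sub_self]
  have hstep : ∀ t, t < m + 1 → D (t + 1) = D t + (b' t - a' t) := by
    intro t ht
    simp only [hD, ha', hb', dif_pos ht]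
    rw [MajAux.psum_succ (decr y) t ht, MajAux.psum_succ (decr x) t ht]
    ring
  have haI : ∀ t, t < m + 1 → a' t ∈ I := by
    intro t ht
    simp only [ha', dif_pos ht]
    exact MajAux.decr_mem x hx _
  have hbI : ∀ t, t < m + 1 → b' t ∈ I := by
    intro t ht
    simp only [hb', dif_pos ht]
    exact MajAux.decr_mem y hy _
  have ha'anti : ∀ s t, s ≤ t → t < m + 1 → a' t ≤ a' s := by
    intro s t hst ht
    have hs : s < m + 1 := lt_of_le_of_lt hst ht
    simp only [ha', dif_pos ht, dif_pos hs]
    exact MajAux.decr_antitone x (show (⟨s, hs⟩ : Fin (m + 1)) ≤ ⟨t, ht⟩ from hst)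
  have hb'anti : ∀ s t, s ≤ t → t < m + 1 → b' t ≤ b' s := by
    intro s t hst ht
    have hs : s < m + 1 := lt_of_le_of_lt hst ht
    simp only [hb', dif_pos ht, dif_pos hs]
    exact MajAux.decr_antitone y (show (⟨s, hs⟩ : Fin (m + 1)) ≤ ⟨t, ht⟩ from hst)
  -- the set of indices where the two rearrangements differ
  set act : Finset ℕ := (Finset.range (m + 1)).filter (fun t => a' t ≠ b' t) with hact
  have hmem_act : ∀ t, t ∈ act ↔ (t < m + 1 ∧ a' t ≠ b' t) := by
    intro t
    simp [hact, Finset.mem_filter, Finset.mem_range]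
  have hactne : act.Nonempty := by
    refine ⟨(i0 : ℕ), (hmem_act _).mpr ⟨i0.isLt, ?_⟩⟩
    simpa only [ha', hb', dif_pos i0.isLt, Fin.eta] using hi0
  set i := act.min' hactne with hidef
  have hiact : i ∈ act := act.min'_mem hactne
  have hilt : i < m + 1 := ((hmem_act i).mp hiact).1
  have hine : a' i ≠ b' i := ((hmem_act i).mp hiact).2
  -- σ t = the largest active index ≤ t (or i if there is none)
  set σ : ℕ → ℕ := fun t =>
    if h : (act.filter (fun s => s ≤ t)).Nonempty then (act.filter (fun s => s ≤ t)).max' h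
    else i with hσ
  have hσ_act : ∀ t, σ t ∈ act := by
    intro t
    simp only [hσ]
    split_ifs with h
    · exact Finset.mem_of_mem_filter _ (Finset.max'_mem _ h)
    · exact hiact
  have hσ_mono : Monotone σ := by
    intro t u htu
    have hsub : act.filter (fun s => s ≤ t) ⊆ act.filter (fun s => s ≤ u) := by
      intro s hs
      rw [Finset.mem_filter] at hs ⊢
      exact ⟨hs.1, le_trans hs.2 htu⟩
    simp only [hσ]
    split_ifs with h1 h2 h2
    · exact Finset.max'_subset h1 hsub
    · exact absurd (h1.mono hsub) h2
    · refine act.min'_le _ (Finset.mem_of_mem_filter _ (Finset.max'_mem _ h2))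
    · exact le_refl i
  have hσ_id : ∀ t, t ∈ act → σ t = t := by
    intro t ht
    have hne2 : (act.filter (fun s => s ≤ t)).Nonempty :=
      ⟨t, Finset.mem_filter.mpr ⟨ht, le_refl t⟩⟩
    simp only [hσ, dif_pos hne2]
    refine le_antisymm (Finset.max'_le _ _ _ (fun s hs => (Finset.mem_filter.mp hs).2)) ?_
    refine Finset.le_max' _ _ ?_
    exact Finset.mem_filter.mpr ⟨ht, le_refl t⟩
  -- slopes
  set c' : ℕ → ℝ := fun t => MajAux.msl φ (a' (σ t)) (b' (σ t)) with hc'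
  have hmsl_anti : ∀ s t, s ∈ act → t ∈ act → s ≤ t →
      MajAux.msl φ (a' t) (b' t) ≤ MajAux.msl φ (a' s) (b' s) := by
    intro s t hs ht hst
    obtain ⟨htlt, htne⟩ := (hmem_act t).mp ht
    obtain ⟨hslt, hsne⟩ := (hmem_act s).mp hs
    exact MajAux.msl_mono hφ.convexOn (haI t htlt) (hbI t htlt) (haI s hslt) (hbI s hslt)
      htne hsne (ha'anti s t hst htlt) (hb'anti s t hst htlt)
  have hc'anti : ∀ t u, t ≤ u → c' u ≤ c' t := by
    intro t u htu
    simp only [hc']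
    exact hmsl_anti (σ t) (σ u) (hσ_act t) (hσ_act u) (hσ_mono htu)
  have hc'spec : ∀ t, t < m + 1 → c' t * (b' t - a' t) = φ (b' t) - φ (a' t) := by
    intro t ht
    by_cases hab : a' t = b' t
    · rw [hab]
      simp
    · have htact : t ∈ act := (hmem_act t).mpr ⟨ht, hab⟩
      have : c' t = MajAux.msl φ (a' t) (b' t) := by
        simp only [hc', hσ_id t htact]
      rw [this]
      exact MajAux.msl_spec φ hab
  -- the total φ-sum difference vanishes
  have hzero : ∑ t ∈ Finset.range (m + 1), (φ (b' t) - φ (a' t)) = 0 := by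
    have e1 : ∑ t ∈ Finset.range (m + 1), φ (b' t) = ∑ i, φ (y i) := by
      rw [← MajAux.sum_decr y φ, ← Fin.sum_univ_eq_sum_range (fun t => φ (b' t)) (m + 1)]
      refine Finset.sum_congr rfl (fun i _ => ?_)
      simp only [hb', dif_pos i.isLt, Fin.eta]
    have e2 : ∑ t ∈ Finset.range (m + 1), φ (a' t) = ∑ i, φ (x i) := by
      rw [← MajAux.sum_decr x φ, ← Fin.sum_univ_eq_sum_range (fun t => φ (a' t)) (m + 1)]
      refine Finset.sum_congr rfl (fun i _ => ?_)
      simp only [ha', dif_pos i.isLt, Fin.eta]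
    rw [Finset.sum_sub_distrib, e1, e2, heq, sub_self]
  -- Abel summation
  have habel : ∑ t ∈ Finset.range m, (c' t - c' (t + 1)) * D (t + 1) = 0 := by
    have h1 : ∑ t ∈ Finset.range (m + 1), c' t * (D (t + 1) - D t)
        = ∑ t ∈ Finset.range (m + 1), (φ (b' t) - φ (a' t)) := by
      refine Finset.sum_congr rfl (fun t ht => ?_)
      rw [Finset.mem_range] at ht
      have hd2 : D (t + 1) - D t = b' t - a' t := by
        rw [hstep t ht]
        ring
      rw [hd2, hc'spec t ht]
    have h2 := MajAux.abel_aux c' D hD0 m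
    rw [h1, hzero, hDtot, mul_zero, add_zero] at h2
    exact h2.symm
  have hterm0 : ∀ t ∈ Finset.range m, (c' t - c' (t + 1)) * D (t + 1) = 0 := by
    have hnn : ∀ t ∈ Finset.range m, 0 ≤ (c' t - c' (t + 1)) * D (t + 1) := by
      intro t _
      exact mul_nonneg (sub_nonneg.mpr (hc'anti t (t + 1) (Nat.le_succ t))) (hDnonneg _)
    exact fun t ht => (Finset.sum_eq_zero_iff_of_nonneg hnn).mp habel t ht
  -- D vanishes up to index i
  have hDpre : ∀ t, t ≤ i → D t = 0 := by
    intro t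
    induction t with
    | zero => intro _; exact hD0
    | succ t iht =>
      intro hti
      have ht1 : t < i := hti
      have htm : t < m + 1 := lt_trans ht1 hilt
      have htact : t ∉ act := fun h => absurd (act.min'_le t h) (not_le.mpr ht1)
      have hab : a' t = b' t := by
        by_contra hne2
        exact htact ((hmem_act t).mpr ⟨htm, hne2⟩)
      rw [hstep t htm, iht (le_of_lt ht1), hab]
      ring
  have hDi1eq : D (i + 1) = b' i - a' i := by
    rw [hstep i hilt, hDpre i le_rfl]
    ring
  have hDi1 : 0 < D (i + 1) := by
    refine lt_of_le_of_ne (hDnonneg (i + 1)) (Ne.symm ?_)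
    rw [hDi1eq]
    exact sub_ne_zero.mpr (Ne.symm hine)
  have hb_gt : a' i < b' i := by
    have := hDi1
    rw [hDi1eq] at this
    linarith
  -- i < m
  have him : i < m := by
    rcases lt_or_ge i m with h | h
    · exact h
    · exfalso
      have hieq : i = m := by omega
      have h5 : D (m + 1) = D m + (b' m - a' m) := hstep m (Nat.lt_succ_self m)
      have h6 : D m = 0 := hDpre m (by omega)
      rw [hDtot, h6] at h5
      have : a' m = b' m := by linarith
      exact hine (hieq ▸ this)
  -- j = the first index past i where D (j+1) = 0
  have hPex : ∃ t, i < t ∧ D (t + 1) = 0 := ⟨m, him, hDtot⟩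
  set j := Nat.find hPex with hjdef
  have hjspec : i < j ∧ D (j + 1) = 0 := Nat.find_spec hPex
  have hjle : j ≤ m := Nat.find_min' hPex ⟨him, hDtot⟩
  have hjlt : j < m + 1 := by omega
  have hDposMid : ∀ t, i < t → t ≤ j → 0 < D t := by
    intro t hit htj
    rcases eq_or_lt_of_le (Nat.succ_le_of_lt hit) with h | h
    · exact h ▸ hDi1
    · have hne4 : D t ≠ 0 := by
        intro h0
        have hmin : ¬(i < t - 1 ∧ D (t - 1 + 1) = 0) :=
          Nat.find_min hPex (by omega : t - 1 < j)
        exact hmin ⟨by omega, by rw [show t - 1 + 1 = t by omega]; exact h0⟩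
      exact lt_of_le_of_ne (hDnonneg t) (Ne.symm hne4)
  have hja : b' j < a' j := by
    have h5 : D (j + 1) = D j + (b' j - a' j) := hstep j hjlt
    have h6 := hDposMid j hjspec.1 le_rfl
    rw [hjspec.2] at h5
    linarith
  have hjact : j ∈ act := (hmem_act j).mpr ⟨hjlt, ne_of_gt hja⟩
  -- the slopes are constant from i to j
  have hchain : ∀ t, i ≤ t → t ≤ j → c' i = c' t := by
    intro t
    induction t with
    | zero =>
      intro h1 _
      have : i = 0 := Nat.le_zero.mp h1
      rw [this]
    | succ t iht =>
      intro h1 h2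
      rcases eq_or_lt_of_le h1 with h | h
      · rw [h]
      · have hit : i ≤ t := by omega
        have hrec := iht hit (by omega)
        have hterm := hterm0 t (Finset.mem_range.mpr (by omega : t < m))
        have hDp : 0 < D (t + 1) := hDposMid (t + 1) (by omega) h2
        have hcc : c' t = c' (t + 1) := by
          rcases mul_eq_zero.mp hterm with h' | h'
          · linarith [h']
          · exact absurd h' (ne_of_gt hDp)
        rw [hrec, hcc]
  have hcij : c' i = c' j := hchain j (le_of_lt hjspec.1) le_rfl
  -- but strict convexity forces c' j < c' i
  have hc'i : c' i = MajAux.msl φ (a' i) (b' i) := by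
    simp only [hc', hσ_id i hiact]
  have hc'j : c' j = MajAux.msl φ (a' j) (b' j) := by
    simp only [hc', hσ_id j hjact]
  have hstrict : c' j < c' i := by
    rw [hc'i, hc'j]
    exact MajAux.msl_strict hφ (haI j hjlt) (hbI j hjlt) (haI i hilt) (hbI i hilt)
      hja (ha'anti i j (le_of_lt hjspec.1) hjlt) hb_gt
  exact ne_of_gt hstrict hcij
end

section
/- Let γ₁ ≥ … ≥ γ_p be reals, r₁,…,r_p positive integers with r = r₁+…+r_p, and let α = (γ₁·1_{r₁}, …, γ_p·1_{r_p}) ∈ (ℝ^r)↓ be the block-constant vector. Let β ∈ (ℝ^r)↓ with tr(α) = tr(β). Setting s_k = r₁+…+r_k, one has α ≺ β if and only if ∑_{i=1}^k γ_i r_i ≤ ∑_{j=1}^{s_k} β_j for every k ∈ {1,…,p−1}. -/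
lemma decr_of_antitone {n : ℕ} {x : Fin n → ℝ} (hx : Antitone x) : decr x = x := by
  have hm : Monotone (x ∘ (Fin.revPerm : Equiv.Perm (Fin n))) := by
    intro a b hab
    apply hx
    simpa [Fin.rev_le_rev] using hab
  have h := (Tuple.comp_sort_eq_comp_iff_monotone (σ := Fin.revPerm)).mpr hm
  funext i
  have h1 := congrFun h i.rev
  simp only [Function.comp_apply, Fin.revPerm_apply, Fin.rev_rev] at h1
  simpa [decr] using h1.symm

lemma psum_split {n : ℕ} (x : Fin n → ℝ) {a b : ℕ} (hab : a ≤ b) :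
    psum x b = psum x a +
      ∑ i ∈ Finset.univ.filter (fun i : Fin n => a ≤ (i:ℕ) ∧ (i:ℕ) < b), x i := by
  rw [psum, psum, ← Finset.sum_union]
  · congr 1
    ext i
    simp only [Finset.mem_union, Finset.mem_filter, Finset.mem_univ, true_and]
    omega
  · rw [Finset.disjoint_left]
    intro i hi hi'
    simp only [Finset.mem_filter, Finset.mem_univ, true_and] at hi hi'
    omega

lemma card_interval {n a b : ℕ} (hb : b ≤ n) :
    (Finset.univ.filter (fun i : Fin n => a ≤ (i:ℕ) ∧ (i:ℕ) < b)).card = b - a := by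
  have h : ∀ m ∈ Finset.Ico a b, m < n := fun m hm => by
    simp only [Finset.mem_Ico] at hm; omega
  have : Finset.univ.filter (fun i : Fin n => a ≤ (i:ℕ) ∧ (i:ℕ) < b)
      = (Finset.Ico a b).attachFin h := by
    ext i
    simp [Finset.mem_attachFin]
  rw [this, Finset.card_attachFin, Nat.card_Ico]

lemma psum_of_le {n : ℕ} (x : Fin n → ℝ) {m : ℕ} (h : n ≤ m) :
    psum x m = ∑ i, x i := by
  rw [psum]
  congr 1
  ext i
  simp only [Finset.mem_filter, Finset.mem_univ, true_and, iff_true]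
  omega

/-- The key analytic step: if `α` is block-constant along the breakpoints `S`
and the partial-sum inequalities hold at all breakpoints, they hold everywhere. -/
lemma psum_le_of_breakpoints {n p : ℕ} (S : ℕ → ℕ) (g : ℕ → ℝ)
    (α β : Fin n → ℝ)
    (hS0 : S 0 = 0) (hSp : S p = n) (hSmono : ∀ a b : ℕ, a ≤ b → S a ≤ S b)
    (hblock : ∀ j, j < p → ∀ i : Fin n, S j ≤ (i:ℕ) → (i:ℕ) < S (j+1) → α i = g j)
    (hend : ∀ j, j ≤ p → psum α (S j) ≤ psum β (S j))
    (hβ : Antitone β) (m : ℕ) : psum α m ≤ psum β m := by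
  classical
  by_cases hm : n ≤ m
  · have h1 : psum α m = psum α (S p) := by
      rw [hSp, psum_of_le α hm, psum_of_le α le_rfl]
    have h2 : psum β (S p) = psum β m := by
      rw [hSp, psum_of_le β hm, psum_of_le β le_rfl]
    rw [h1, ← h2]
    exact hend p le_rfl
  push_neg at hm
  obtain ⟨j, hjp, hj1, hj2⟩ : ∃ j, j < p ∧ S j ≤ m ∧ m < S (j+1) := by
    refine ⟨Nat.findGreatest (fun j => S j ≤ m) p, ?_, ?_, ?_⟩
    · have hle := Nat.findGreatest_le (P := fun j => S j ≤ m) p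
      rcases eq_or_lt_of_le hle with h | h
      · exfalso
        have := Nat.findGreatest_spec (P := fun j => S j ≤ m) (Nat.zero_le p)
          (show S 0 ≤ m by rw [hS0]; exact Nat.zero_le m)
        rw [h, hSp] at this
        omega
      · exact h
    · exact Nat.findGreatest_spec (P := fun j => S j ≤ m) (Nat.zero_le p)
        (show S 0 ≤ m by rw [hS0]; exact Nat.zero_le m)
    · by_contra h
      push_neg at h
      have hle := Nat.findGreatest_le (P := fun j => S j ≤ m) p
      have hlt : Nat.findGreatest (fun j => S j ≤ m) p < p := by
        rcases eq_or_lt_of_le hle with h' | h' 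
        · exfalso
          have := Nat.findGreatest_spec (P := fun j => S j ≤ m) (Nat.zero_le p)
            (show S 0 ≤ m by rw [hS0]; exact Nat.zero_le m)
          rw [h', hSp] at this
          omega
        · exact h'
      exact Nat.findGreatest_is_greatest (P := fun j => S j ≤ m)
        (Nat.lt_succ_self _) (by omega) h
  have hSn : S (j+1) ≤ n := by rw [← hSp]; exact hSmono _ _ (by omega)
  have hconst : ∀ a b : ℕ, S j ≤ a → a ≤ b → b ≤ S (j+1) →
      ∑ i ∈ Finset.univ.filter (fun i : Fin n => a ≤ (i:ℕ) ∧ (i:ℕ) < b), α i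
        = ((b - a : ℕ) : ℝ) * g j := by
    intro a b h1 h2 h3
    have hc : ∀ i ∈ Finset.univ.filter (fun i : Fin n => a ≤ (i:ℕ) ∧ (i:ℕ) < b),
        α i = g j := by
      intro i hi
      simp only [Finset.mem_filter, Finset.mem_univ, true_and] at hi
      exact hblock j hjp i (by omega) (by omega)
    rw [Finset.sum_congr rfl hc, Finset.sum_const, card_interval (by omega),
      nsmul_eq_mul]
  by_cases hcase : ∀ i : Fin n, S j ≤ (i:ℕ) → (i:ℕ) < m → g j ≤ β i
  · have e1 := psum_split α hj1
    have e2 := psum_split β hj1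
    have eα := hconst (S j) m le_rfl hj1 (le_of_lt hj2)
    have eβ : ((m - S j : ℕ) : ℝ) * g j
        ≤ ∑ i ∈ Finset.univ.filter (fun i : Fin n => S j ≤ (i:ℕ) ∧ (i:ℕ) < m), β i := by
      have hle := Finset.sum_le_sum (s := Finset.univ.filter
          (fun i : Fin n => S j ≤ (i:ℕ) ∧ (i:ℕ) < m))
        (f := fun _ => g j) (g := β) (fun i hi => by
          simp only [Finset.mem_filter, Finset.mem_univ, true_and] at hi
          exact hcase i hi.1 hi.2)
      rwa [Finset.sum_const, card_interval (by omega), nsmul_eq_mul] at hle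
    have he := hend j (le_of_lt hjp)
    linarith
  · push_neg at hcase
    obtain ⟨i0, hi0a, hi0b, hi0c⟩ := hcase
    have e1 := psum_split α (le_of_lt hj2)
    have e2 := psum_split β (le_of_lt hj2)
    have eα := hconst m (S (j+1)) hj1 (le_of_lt hj2) le_rfl
    have eβ : ∑ i ∈ Finset.univ.filter
          (fun i : Fin n => m ≤ (i:ℕ) ∧ (i:ℕ) < S (j+1)), β i
        ≤ ((S (j+1) - m : ℕ) : ℝ) * g j := by
      have hle := Finset.sum_le_sum (s := Finset.univ.filter
          (fun i : Fin n => m ≤ (i:ℕ) ∧ (i:ℕ) < S (j+1)))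
        (f := β) (g := fun _ => g j) (fun i hi => by
          simp only [Finset.mem_filter, Finset.mem_univ, true_and] at hi
          have h1 : β i ≤ β i0 := hβ (show i0 ≤ i by rw [Fin.le_def]; omega)
          linarith)
      rwa [Finset.sum_const, card_interval hSn, nsmul_eq_mul] at hle
    have he := hend (j+1) hjp
    linarith


/-- Majorization against a block-constant non-increasing vector is
characterized by the partial-sum inequalities at the block breakpoints. -/
theorem stmt4 {p : ℕ} (hp : 0 < p) (γ : Fin p → ℝ) (hγ : Antitone γ)
    (r : Fin p → ℕ) (hr : ∀ l, 0 < r l)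
    (α β : Fin (∑ l, r l) → ℝ)
    (hα : ∀ (j : Fin p) (i : Fin (∑ l, r l)),
      (∑ l ∈ Finset.univ.filter (fun l => l < j), r l) ≤ (i : ℕ) →
      (i : ℕ) < (∑ l ∈ Finset.univ.filter (fun l => l ≤ j), r l) → α i = γ j)
    (hαs : Antitone α) (hβ : Antitone β)
    (hsum : (∑ i, α i) = ∑ i, β i) :
    Maj α β ↔
      ∀ k : Fin p, (k : ℕ) + 1 < p →
        (∑ l ∈ Finset.univ.filter (fun l => l ≤ k), γ l * (r l : ℝ)) ≤
          psum β (∑ l ∈ Finset.univ.filter (fun l => l ≤ k), r l) := by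
  classical
  set S : ℕ → ℕ := fun j => ∑ l ∈ Finset.univ.filter (fun l : Fin p => (l:ℕ) < j), r l
    with hSdef
  have hfiltlt : ∀ j : Fin p, (Finset.univ.filter (fun l : Fin p => l < j))
      = Finset.univ.filter (fun l : Fin p => (l:ℕ) < (j:ℕ)) := by
    intro j; ext l
    simp only [Finset.mem_filter, Finset.mem_univ, true_and, Fin.lt_def]
  have hfiltle : ∀ j : Fin p, (Finset.univ.filter (fun l : Fin p => l ≤ j))
      = Finset.univ.filter (fun l : Fin p => (l:ℕ) < (j:ℕ)+1) := by
    intro j; ext l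
    simp only [Finset.mem_filter, Finset.mem_univ, true_and, Fin.le_def]
    omega
  have hS0 : S 0 = 0 := by simp [hSdef]
  have hSp : S p = ∑ l, r l := by
    rw [hSdef]
    simp only
    congr 1
    apply Finset.filter_true_of_mem
    intro l _; exact l.isLt
  have hSmono : ∀ a b : ℕ, a ≤ b → S a ≤ S b := by
    intro a b hab
    apply Finset.sum_le_sum_of_subset
    intro l hl
    simp only [Finset.mem_filter, Finset.mem_univ, true_and] at hl ⊢
    omega
  have hblock : ∀ (j : ℕ) (hj : j < p), ∀ i : Fin (∑ l, r l), S j ≤ (i:ℕ) → (i:ℕ) < S (j+1) →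
      α i = γ ⟨j, hj⟩ := by
    intro j hj i h1 h2
    apply hα ⟨j,hj⟩ i
    · rw [hfiltlt]; exact h1
    · rw [hfiltle]; exact h2
  have hSstep : ∀ (j : ℕ) (hj : j < p), S (j+1) = S j + r ⟨j, hj⟩ := by
    intro j hj
    have hins : Finset.univ.filter (fun l : Fin p => (l:ℕ) < j+1)
        = insert ⟨j,hj⟩ (Finset.univ.filter (fun l : Fin p => (l:ℕ) < j)) := by
      ext l
      simp only [Finset.mem_filter, Finset.mem_univ, true_and, Finset.mem_insert,
        Fin.ext_iff]
      omega
    rw [hSdef]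
    simp only
    rw [hins, Finset.sum_insert (by simp)]
    omega
  have hconst : ∀ (j : ℕ) (hj : j < p) (a b : ℕ), S j ≤ a → a ≤ b → b ≤ S (j+1) →
      ∑ i ∈ Finset.univ.filter (fun i : Fin (∑ l, r l) => a ≤ (i:ℕ) ∧ (i:ℕ) < b), α i
        = ((b - a : ℕ) : ℝ) * γ ⟨j,hj⟩ := by
    intro j hj a b h1 h2 h3
    have hbn : b ≤ ∑ l, r l := by
      rw [← hSp]
      exact le_trans h3 (hSmono _ _ (by omega))
    have hc : ∀ i ∈ Finset.univ.filter
        (fun i : Fin (∑ l, r l) => a ≤ (i:ℕ) ∧ (i:ℕ) < b), α i = γ ⟨j,hj⟩ := by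
      intro i hi
      simp only [Finset.mem_filter, Finset.mem_univ, true_and] at hi
      exact hblock j hj i (by omega) (by omega)
    rw [Finset.sum_congr rfl hc, Finset.sum_const, card_interval hbn, nsmul_eq_mul]
  have hpsumS : ∀ j : ℕ, j ≤ p → psum α (S j)
      = ∑ l ∈ Finset.univ.filter (fun l : Fin p => (l:ℕ) < j), γ l * (r l : ℝ) := by
    intro j
    induction j with
    | zero => intro _; simp [hS0, psum]
    | succ j ih =>
      intro hj
      have hj' : j < p := by omega
      rw [psum_split α (hSmono j (j+1) (by omega)), ih (by omega),
        hconst j hj' (S j) (S (j+1)) le_rfl (hSmono j (j+1) (by omega)) le_rfl]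
      have hins : Finset.univ.filter (fun l : Fin p => (l:ℕ) < j+1)
          = insert ⟨j,hj'⟩ (Finset.univ.filter (fun l : Fin p => (l:ℕ) < j)) := by
        ext l
        simp only [Finset.mem_filter, Finset.mem_univ, true_and, Finset.mem_insert,
          Fin.ext_iff]
        omega
      rw [hins, Finset.sum_insert (by simp)]
      have hd : S (j+1) - S j = r ⟨j,hj'⟩ := by rw [hSstep j hj']; omega
      rw [hd]
      ring
  constructor
  · intro hM k hk
    have h1 := hM.1 (∑ l ∈ Finset.univ.filter (fun l => l ≤ k), r l)
    rw [decr_of_antitone hαs, decr_of_antitone hβ] at h1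
    rw [hfiltle k] at h1 ⊢
    have h2 : psum α (S ((k:ℕ)+1))
        = ∑ l ∈ Finset.univ.filter (fun l : Fin p => (l:ℕ) < (k:ℕ)+1), γ l * (r l : ℝ) :=
      hpsumS ((k:ℕ)+1) (by omega)
    rw [← h2]
    exact h1
  · intro H
    have hend : ∀ j : ℕ, j ≤ p → psum α (S j) ≤ psum β (S j) := by
      intro j hj
      rcases Nat.eq_zero_or_pos j with h0 | h0
      · simp [h0, hS0, psum]
      rcases eq_or_lt_of_le hj with hjp | hjp
      · rw [hjp, hSp, psum_of_le α le_rfl, psum_of_le β le_rfl]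
        exact le_of_eq hsum
      · have hk := H ⟨j-1, by omega⟩ (by simp only [Fin.val_mk]; omega)
        rw [hfiltle ⟨j-1, by omega⟩] at hk
        simp only [Fin.val_mk] at hk
        have hj1 : j - 1 + 1 = j := by omega
        rw [hj1] at hk
        rw [hpsumS j hj]
        exact hk
    refine ⟨?_, hsum⟩
    intro m
    rw [decr_of_antitone hαs, decr_of_antitone hβ]
    exact psum_le_of_breakpoints S (fun j => if h : j < p then γ ⟨j, h⟩ else 0) α β
      hS0 hSp hSmono
      (fun j hj i h1 h2 => by rw [hblock j hj i h1 h2]; simp [hj])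
      hend hβ m
end

section
/- Let α = (α_i)_{i=1}^n ∈ (ℝ_{≥0}^n)↓ and d ≤ n. There exists a unique c ≥ α_d such that ∑_{i=1}^d max{α_i, c} = ∑_{i=1}^n α_i; equivalently c is the unique solution of ∑_{i=1}^d (c − α_i)^+ = ∑_{i=d+1}^n α_i. -/
/-- Existence and uniqueness of the water-level. -/
theorem stmt5 {n : ℕ} (d : ℕ) (hd0 : 0 < d) (hd : d ≤ n)
    (α : Fin n → ℝ) (hα : Antitone α) (hα0 : ∀ i, 0 ≤ α i) :
    ∃! c : ℝ, α ⟨d - 1, by omega⟩ ≤ c ∧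
      (∑ i : Fin d, max (α (Fin.castLE hd i)) c) = ∑ i, α i := by
  have hdn : d - 1 < n := by omega
  set a : ℝ := α ⟨d - 1, hdn⟩ with ha
  set S : ℝ := ∑ i, α i with hS
  set f : ℝ → ℝ := fun c => ∑ i : Fin d, max (α (Fin.castLE hd i)) c with hf
  have hlast : ∀ c : ℝ, α (Fin.castLE hd ⟨d - 1, by omega⟩) = a := by
    intro c; rfl
  -- strict monotonicity on [a, ∞)
  have hmono : ∀ c₁ c₂ : ℝ, a ≤ c₁ → c₁ < c₂ → f c₁ < f c₂ := by
    intro c₁ c₂ hac h12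
    apply Finset.sum_lt_sum
    · intro i _
      exact max_le_max le_rfl h12.le
    · refine ⟨⟨d - 1, by omega⟩, Finset.mem_univ _, ?_⟩
      have h1 : max (α (Fin.castLE hd ⟨d - 1, by omega⟩)) c₁ = c₁ := by
        rw [hlast c₁]; exact max_eq_right hac
      have h2 : max (α (Fin.castLE hd ⟨d - 1, by omega⟩)) c₂ = c₂ := by
        rw [hlast c₂]; exact max_eq_right (hac.trans h12.le)
      rw [h1, h2]; exact h12
  have hcont : Continuous f := by
    apply continuous_finset_sum
    intro i _
    exact continuous_const.max continuous_id
  -- f a ≤ S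
  have hfa : f a ≤ S := by
    have h1 : f a = ∑ i : Fin d, α (Fin.castLE hd i) := by
      apply Finset.sum_congr rfl
      intro i _
      apply max_eq_left
      apply hα
      show (Fin.castLE hd i : Fin n) ≤ ⟨d - 1, hdn⟩
      have := i.isLt
      simp only [Fin.le_def, Fin.coe_castLE]
      omega
    rw [h1, hS]
    have h2 : ∑ i : Fin d, α (Fin.castLE hd i) =
        ∑ i ∈ Finset.univ.map (Fin.castLEEmb hd), α i := by
      rw [Finset.sum_map]; rfl
    rw [h2]
    apply Finset.sum_le_sum_of_subset_of_nonneg (Finset.subset_univ _)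
    intro i _ _
    exact hα0 i
  -- f (max a S) ≥ S
  set b : ℝ := max a S with hb
  have hfb : S ≤ f b := by
    have h1 : b ≤ max (α (Fin.castLE hd ⟨d - 1, by omega⟩)) b := le_max_right _ _
    have h2 : max (α (Fin.castLE hd ⟨d - 1, by omega⟩)) b ≤ f b := by
      apply Finset.single_le_sum (f := fun i : Fin d => max (α (Fin.castLE hd i)) b)
        (fun i _ => le_trans (hα0 _) (le_max_left _ _)) (Finset.mem_univ _)
    exact le_trans (le_max_right a S) (h1.trans h2)
  -- IVT
  obtain ⟨c, hc_mem, hc_eq⟩ : ∃ c ∈ Set.Icc a b, f c = S := by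
    have hab : a ≤ b := le_max_left _ _
    have := intermediate_value_Icc hab hcont.continuousOn
    exact this ⟨hfa, hfb⟩
  refine ⟨c, ⟨hc_mem.1, hc_eq⟩, ?_⟩
  intro y hy
  by_contra hne
  rcases lt_or_gt_of_ne hne with h | h
  · exact absurd (hy.2.trans hc_eq.symm) (ne_of_lt (hmono y c hy.1 h))
  · exact absurd (hc_eq.trans hy.2.symm) (ne_of_lt (hmono c y hc_mem.1 h))
end

section
/- Let α ∈ (ℝ_{≥0}^n)↓, d ≤ n, and let γ ∈ (ℝ_{≥0}^d)↓ be the water-filling of α in dimension d. Then α ≺ γ, i.e., the water-filling majorizes α. -/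
/-- The water-filling of α in dimension d majorizes α. -/
theorem stmt6 {n d : ℕ} (hd0 : 0 < d) (hd : d ≤ n)
    (α : Fin n → ℝ) (hα : Antitone α) (hα0 : ∀ i, 0 ≤ α i)
    (c : ℝ) (γ : Fin d → ℝ) (hwf : IsWaterFilling d hd0 hd α c γ) :
    Maj α γ := by
  obtain ⟨hc, hsum, hγ⟩ := hwf
  have hγanti : Antitone γ := by
    intro i j hij
    rw [hγ i, hγ j]
    exact max_le_max (hα (by simpa using hij)) le_rfl
  have hsumγ : (∑ i, γ i) = ∑ i, α i := by
    rw [← hsum]; exact Finset.sum_congr rfl fun i _ => hγ i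
  have hda : decr α = α := decr_of_antitone hα
  have hdg : decr γ = γ := decr_of_antitone hγanti
  refine ⟨fun k => ?_, hsumγ.symm⟩
  rw [hda, hdg]
  unfold psum
  by_cases hk : k ≤ d
  · have : (∑ i ∈ Finset.univ.filter (fun i : Fin n => (i : ℕ) < k), α i)
        = ∑ i ∈ Finset.univ.filter (fun i : Fin d => (i : ℕ) < k), α (Fin.castLE hd i) := by
      refine Finset.sum_nbij' (fun i => ⟨(i : ℕ) % d, Nat.mod_lt _ hd0⟩)
        (fun i => Fin.castLE hd i) ?_ ?_ ?_ ?_ ?_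
      · intro i hi
        simp only [Finset.mem_filter, Finset.mem_univ, true_and] at hi ⊢
        rw [Nat.mod_eq_of_lt (by omega)]; exact hi
      · intro i hi
        simp only [Finset.mem_filter, Finset.mem_univ, true_and] at hi ⊢
        simpa using hi
      · intro i hi
        simp only [Finset.mem_filter, Finset.mem_univ, true_and] at hi
        ext; simp [Nat.mod_eq_of_lt (by omega : (i : ℕ) < d)]
      · intro i hi; ext
        simp [Nat.mod_eq_of_lt i.isLt]
      · intro i hi
        simp only [Finset.mem_filter, Finset.mem_univ, true_and] at hi
        congr 1
        ext; simp [Nat.mod_eq_of_lt (by omega : (i : ℕ) < d)]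
    rw [this]
    refine Finset.sum_le_sum fun i hi => ?_
    rw [hγ i]; exact le_max_left _ _
  · have h1 : Finset.univ.filter (fun i : Fin d => (i : ℕ) < k) = Finset.univ := by
      ext i; simp only [Finset.mem_filter, Finset.mem_univ, true_and, iff_true]
      have : (i : ℕ) < d := i.isLt; omega
    rw [h1]
    calc (∑ i ∈ Finset.univ.filter (fun i : Fin n => (i : ℕ) < k), α i)
        ≤ ∑ i, α i := Finset.sum_le_sum_of_subset_of_nonneg
          (Finset.filter_subset _ _) (fun i _ _ => hα0 i)
      _ = ∑ i, γ i := hsumγ.symm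
end

section
/- Let α, β ∈ (ℝ_{≥0}^n)↓ with α_i ≥ β_i for all i ∈ {1,…,n}, and let d ≤ n. If γ and δ denote the water-fillings in dimension d of α and β respectively, then γ_i ≥ δ_i for all i ∈ {1,…,d}. In particular, the water-level of α is at least the water-level of β. -/
/-- Monotonicity of the water-filling (and of the water-level) in α. -/
theorem stmt9 {n d : ℕ} (hd0 : 0 < d) (hd : d ≤ n)
    (α β : Fin n → ℝ) (hα : Antitone α) (hα0 : ∀ i, 0 ≤ α i)
    (hβ : Antitone β) (hβ0 : ∀ i, 0 ≤ β i)
    (hab : ∀ i, β i ≤ α i)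
    (c : ℝ) (γ : Fin d → ℝ) (hwfα : IsWaterFilling d hd0 hd α c γ)
    (e : ℝ) (δ : Fin d → ℝ) (hwfβ : IsWaterFilling d hd0 hd β e δ) :
    (∀ i, δ i ≤ γ i) ∧ e ≤ c := by
  obtain ⟨hc1, hc2, hc3⟩ := hwfα
  obtain ⟨he1, he2, he3⟩ := hwfβ
  have hmax : ∀ a b : ℝ, b ≤ a → max a e ≤ max b e + (a - b) := by
    intro a b hba
    rcases le_total a e with h | h
    · have h1 : max a e = e := max_eq_right h
      have h2 : e ≤ max b e := le_max_right _ _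
      linarith
    · have h1 : max a e = a := max_eq_left h
      have h2 : b ≤ max b e := le_max_left _ _
      linarith
  -- key : sum over Fin d of (α - β) ∘ castLE  ≤ sum over Fin n of (α - β)
  have hsub : (∑ i : Fin d, (α (Fin.castLE hd i) - β (Fin.castLE hd i)))
      ≤ ∑ i : Fin n, (α i - β i) := by
    have := Finset.sum_map (Finset.univ : Finset (Fin d))
      (Fin.castLEEmb hd) (fun j => α j - β j)
    simp only [Fin.castLEEmb_apply] at this
    rw [← this]
    apply Finset.sum_le_sum_of_subset_of_nonneg (Finset.subset_univ _)
    intro i _ _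
    linarith [hab i]
  have key : e ≤ c := by
    by_contra h
    push_neg at h
    have h1 : (∑ i : Fin d, max (α (Fin.castLE hd i)) e) ≤ ∑ i, α i := by
      calc (∑ i : Fin d, max (α (Fin.castLE hd i)) e)
          ≤ ∑ i : Fin d, (max (β (Fin.castLE hd i)) e
              + (α (Fin.castLE hd i) - β (Fin.castLE hd i))) := by
            exact Finset.sum_le_sum fun i _ => hmax _ _ (hab _)
        _ = (∑ i : Fin d, max (β (Fin.castLE hd i)) e)
              + ∑ i : Fin d, (α (Fin.castLE hd i) - β (Fin.castLE hd i)) := by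
            rw [Finset.sum_add_distrib]
        _ ≤ (∑ i, β i) + ∑ i : Fin n, (α i - β i) := by
            rw [he2]; linarith
        _ = ∑ i, α i := by rw [← Finset.sum_add_distrib]; simp
    have h2 : (∑ i : Fin d, max (α (Fin.castLE hd i)) c)
        < ∑ i : Fin d, max (α (Fin.castLE hd i)) e := by
      apply Finset.sum_lt_sum
      · intro i _
        exact max_le_max le_rfl h.le
      · refine ⟨⟨d - 1, by omega⟩, Finset.mem_univ _, ?_⟩
        have hcast : Fin.castLE hd (⟨d - 1, by omega⟩ : Fin d) = ⟨d - 1, by omega⟩ := rfl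
        rw [hcast, max_eq_right hc1, max_eq_right (hc1.trans h.le)]
        exact h
    rw [hc2] at h2
    linarith
  refine ⟨fun i => ?_, key⟩
  rw [hc3 i, he3 i]
  exact max_le_max (hab _) key
end

section
/- Let α ∈ (ℝ_{≥0}^n)↓ and d' ≤ d ≤ n. If the water-filling of α in dimension d is constant, equal to c·1_d for some c > 0, then the water-filling of α in dimension d' equals c'·1_{d'} for some c' ≥ c. -/
/-- If the water-filling of α in dimension d is the constant vector c·1_d with
c > 0, then for d' ≤ d the water-filling in dimension d' is c'·1_{d'} with c' ≥ c. -/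
theorem stmt10 {n : ℕ} (d d' : ℕ) (hd0' : 0 < d') (hdd : d' ≤ d) (hd : d ≤ n)
    (α : Fin n → ℝ) (hα : Antitone α) (hα0 : ∀ i, 0 ≤ α i)
    (c : ℝ) (hc : 0 < c) (γ : Fin d → ℝ)
    (hwf : IsWaterFilling d (lt_of_lt_of_le hd0' hdd) hd α c γ)
    (hconst : ∀ i, γ i = c)
    (c' : ℝ) (γ' : Fin d' → ℝ)
    (hwf' : IsWaterFilling d' hd0' (le_trans hdd hd) α c' γ') :
    c ≤ c' ∧ ∀ i, γ' i = c' := by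
  obtain ⟨h1, h2, h3⟩ := hwf
  obtain ⟨h1', h2', h3'⟩ := hwf'
  have hmax : ∀ i : Fin d, max (α (Fin.castLE hd i)) c = c := by
    intro i; rw [← h3 i, hconst i]
  have hle : ∀ i : Fin d, α (Fin.castLE hd i) ≤ c := by
    intro i
    exact (le_max_left _ _).trans (le_of_eq (hmax i))
  have hle' : ∀ i : Fin d', α (Fin.castLE (hdd.trans hd) i) ≤ c := by
    intro i
    have h := hle (Fin.castLE hdd i)
    have he : Fin.castLE hd (Fin.castLE hdd i) = Fin.castLE (hdd.trans hd) i := by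
      apply Fin.ext; simp
    rwa [he] at h
  have hsum : (∑ i, α i) = (d : ℝ) * c := by
    rw [← h2]
    simp [hmax, Finset.sum_const, mul_comm]
  have hcc : c ≤ c' := by
    by_contra h
    push_neg at h
    have hlt : (∑ i : Fin d', max (α (Fin.castLE (hdd.trans hd) i)) c')
        < ∑ _i : Fin d', c := by
      apply Finset.sum_lt_sum
      · intro i _
        exact max_le (hle' i) h.le
      · refine ⟨⟨d' - 1, by omega⟩, Finset.mem_univ _, ?_⟩
        have hidx : Fin.castLE (hdd.trans hd) ⟨d' - 1, by omega⟩
            = (⟨d' - 1, by omega⟩ : Fin n) := by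
          apply Fin.ext; simp
        rw [hidx, max_eq_right h1']
        exact h
    rw [h2', hsum] at hlt
    simp only [Finset.sum_const, Finset.card_univ, Fintype.card_fin, nsmul_eq_mul] at hlt
    have : (d : ℝ) * c ≤ (d' : ℝ) * c := hlt.le
    have hdd' : (d' : ℝ) ≤ d := Nat.cast_le.mpr hdd
    nlinarith
  refine ⟨hcc, fun i => ?_⟩
  rw [h3' i, max_eq_right ((hle' i).trans hcc)]
end

section
/- Let a' = (a'_i)_{i=1}^n ∈ (ℝ_{≥0}^n)↓ with water-filling γ' = (γ'_i)_{i=1}^d in dimension d ≤ n and water-level c'. Define, for t ∈ [0, γ'_1], a_i(t) = (min{t, c'}/c') · min{a'_i, max{t, c'}}. Then the vector a(t) = (a_i(t))_{i=1}^n is non-negative and non-increasing, and its water-filling in dimension d equals (min{γ'_i, t})_{i=1}^d. -/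
lemma sum_split_range {d n : ℕ} (hd : d ≤ n) (F : ℕ → ℝ) :
    ∑ i ∈ Finset.range n, F i
      = (∑ i ∈ Finset.range d, F i) + ∑ i ∈ Finset.Ico d n, F i := by
  rw [Finset.range_eq_Ico, ← Finset.sum_Ico_consecutive F (Nat.zero_le d) hd,
    ← Finset.range_eq_Ico]

lemma fin_sum_split {n d : ℕ} (hd : d ≤ n) (g : Fin n → ℝ) :
    ∑ i : Fin n, g i
      = (∑ i : Fin d, g (Fin.castLE hd i))
        + ∑ k ∈ Finset.Ico d n, (if h : k < n then g ⟨k, h⟩ else 0) := by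
  set F : ℕ → ℝ := fun k => if h : k < n then g ⟨k, h⟩ else 0 with hF
  have h1 : ∑ i : Fin n, g i = ∑ k ∈ Finset.range n, F k := by
    rw [← Fin.sum_univ_eq_sum_range]
    exact Finset.sum_congr rfl (fun i _ => by simp [hF, i.isLt])
  have h2 : ∑ i : Fin d, g (Fin.castLE hd i) = ∑ k ∈ Finset.range d, F k := by
    rw [← Fin.sum_univ_eq_sum_range]
    refine Finset.sum_congr rfl (fun i _ => ?_)
    have hi : (i : ℕ) < n := lt_of_lt_of_le i.isLt hd
    simp [hF, hi]
    rfl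
  rw [h1, h2, sum_split_range hd]

lemma wf_level_unique {d : ℕ} (hd0 : 0 < d) (b : Fin d → ℝ)
    (c1 c2 : ℝ) (h12 : c1 ≤ c2)
    (h1 : b ⟨d - 1, by omega⟩ ≤ c1)
    (hs : (∑ i, max (b i) c1) = ∑ i, max (b i) c2) : c1 = c2 := by
  by_contra hne
  have hlt : c1 < c2 := lt_of_le_of_ne h12 hne
  have : (∑ i, max (b i) c1) < ∑ i, max (b i) c2 := by
    refine Finset.sum_lt_sum (fun i _ => max_le_max le_rfl h12) ?_
    exact ⟨⟨d - 1, by omega⟩, Finset.mem_univ _,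
      by rw [max_eq_right h1]; exact lt_of_lt_of_le hlt (le_max_right _ _)⟩
  linarith


/-- Properties of the deformed vector a(t): it is nonnegative, non-increasing,
and its water-filling in dimension d is (min{γ'ᵢ, t})ᵢ. -/
theorem stmt11 {n d : ℕ} (hd0 : 0 < d) (hd : d ≤ n)
    (a' : Fin n → ℝ) (ha : Antitone a') (ha0 : ∀ i, 0 ≤ a' i)
    (c' : ℝ) (hc' : 0 < c') (γ' : Fin d → ℝ)
    (hwf : IsWaterFilling d hd0 hd a' c' γ')
    (t : ℝ) (ht0 : 0 ≤ t) (ht1 : t ≤ γ' ⟨0, hd0⟩) :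
    (∀ i, 0 ≤ min t c' / c' * min (a' i) (max t c')) ∧
    (Antitone fun i => min t c' / c' * min (a' i) (max t c')) ∧
    (∀ (ct : ℝ) (γt : Fin d → ℝ),
      IsWaterFilling d hd0 hd (fun i => min t c' / c' * min (a' i) (max t c')) ct γt →
      ∀ i, γt i = min (γ' i) t) := by
  obtain ⟨g1, g2, g3⟩ := hwf
  have hM0 : (0:ℝ) ≤ max t c' := le_trans hc'.le (le_max_right _ _)
  have hq0 : (0:ℝ) ≤ min t c' / c' := div_nonneg (le_min ht0 hc'.le) hc'.le
  refine ⟨fun i => mul_nonneg hq0 (le_min (ha0 i) hM0), ?_, ?_⟩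
  · intro i j hij
    exact mul_le_mul_of_nonneg_left (min_le_min (ha hij) le_rfl) hq0
  · intro ct γt hwt i
    obtain ⟨h1, h2, h3⟩ := hwt
    set a : Fin n → ℝ := fun i => min t c' / c' * min (a' i) (max t c') with ha_def
    have htail : ∀ i : Fin n, d ≤ (i : ℕ) → a' i ≤ c' := by
      intro i hdi
      refine le_trans (ha ?_) g1
      rw [Fin.le_def]
      simpa using by omega
    obtain ⟨Hpt, Hlast, Hsum⟩ :
        (∀ j : Fin d, max (a (Fin.castLE hd j)) (min t c') = min (γ' j) t) ∧
        (a ⟨d - 1, by omega⟩ ≤ min t c') ∧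
        ((∑ j : Fin d, max (a (Fin.castLE hd j)) (min t c')) = ∑ i, a i) := by
      rcases le_total t c' with hA | hB
      · -- case t ≤ c'
        have hmt : min t c' = t := min_eq_left hA
        have hMt : max t c' = c' := max_eq_right hA
        have ha_eq : ∀ i, a i = t / c' * min (a' i) c' := by
          intro i; rw [ha_def]; simp only [hmt, hMt]
        have hub : ∀ i : Fin n, a i ≤ t := by
          intro i
          rw [ha_eq]
          calc t / c' * min (a' i) c' ≤ t / c' * c' :=
                mul_le_mul_of_nonneg_left (min_le_right _ _) (div_nonneg ht0 hc'.le)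
            _ = t := div_mul_cancel₀ t hc'.ne'
        have Hpt : ∀ j : Fin d, max (a (Fin.castLE hd j)) (min t c') = min (γ' j) t := by
          intro j
          rw [hmt, max_eq_right (hub _), g3 j,
            min_eq_right (le_trans hA (le_max_right _ _))]
        refine ⟨Hpt, by rw [hmt]; exact hub _, ?_⟩
        -- sum identity
        have Smin : (∑ i : Fin n, min (a' i) c') = d * c' := by
          have split1 := fin_sum_split hd (fun i => min (a' i) c')
          have split2 := fin_sum_split hd a'
          have tailEq : (∑ k ∈ Finset.Ico d n,
                (if h : k < n then min (a' ⟨k, h⟩) c' else 0))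
              = ∑ k ∈ Finset.Ico d n, (if h : k < n then a' ⟨k, h⟩ else 0) := by
            refine Finset.sum_congr rfl (fun k hk => ?_)
            obtain ⟨hk1, hk2⟩ := Finset.mem_Ico.mp hk
            rw [dif_pos hk2, dif_pos hk2, min_eq_left (htail _ hk1)]
          have headEq : (∑ j : Fin d, min (a' (Fin.castLE hd j)) c')
              = (∑ j : Fin d, a' (Fin.castLE hd j)) + d * c'
                - ∑ j : Fin d, max (a' (Fin.castLE hd j)) c' := by
            have pw : ∀ j : Fin d, min (a' (Fin.castLE hd j)) c'
                = a' (Fin.castLE hd j) + c' - max (a' (Fin.castLE hd j)) c' := by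
              intro j
              have := min_add_max (a' (Fin.castLE hd j)) c'
              linarith
            rw [Finset.sum_congr rfl (fun j _ => pw j), Finset.sum_sub_distrib,
              Finset.sum_add_distrib, Finset.sum_const, Finset.card_univ,
              Fintype.card_fin, nsmul_eq_mul]
          linarith [g2]
        have lhs_eq : (∑ j : Fin d, max (a (Fin.castLE hd j)) (min t c')) = d * t := by
          rw [Finset.sum_congr rfl (fun j _ => by rw [hmt, max_eq_right (hub _)]),
            Finset.sum_const, Finset.card_univ, Fintype.card_fin, nsmul_eq_mul]
        have rhs_eq : (∑ i, a i) = d * t := by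
          rw [Finset.sum_congr rfl (fun i _ => ha_eq i), ← Finset.mul_sum, Smin]
          field_simp
        rw [lhs_eq, rhs_eq]
      · -- case c' ≤ t
        have hmt : min t c' = c' := min_eq_right hB
        have hMt : max t c' = t := max_eq_left hB
        have ha_eq : ∀ i, a i = min (a' i) t := by
          intro i; rw [ha_def]; simp only [hmt, hMt, div_self hc'.ne', one_mul]
        have Hpt : ∀ j : Fin d, max (a (Fin.castLE hd j)) (min t c') = min (γ' j) t := by
          intro j
          rw [ha_eq, hmt, g3 j]
          rcases le_total (a' (Fin.castLE hd j)) c' with h | h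
          · rw [min_eq_left (h.trans hB), max_eq_right h, min_eq_left hB]
          · rw [max_eq_left h]
            exact max_eq_left (le_min h hB)
        refine ⟨Hpt, ?_, ?_⟩
        · rw [ha_eq, hmt]
          exact le_trans (min_le_left _ _) g1
        · rw [Finset.sum_congr rfl (fun j _ => Hpt j),
            Finset.sum_congr rfl (fun i _ => ha_eq i)]
          have pw : ∀ j : Fin d, min (γ' j) t
              = min (a' (Fin.castLE hd j)) t
                + (max (a' (Fin.castLE hd j)) c' - a' (Fin.castLE hd j)) := by
            intro j
            rw [g3 j]
            rcases le_total (a' (Fin.castLE hd j)) c' with h | h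
            · rw [max_eq_right h, min_eq_left hB, min_eq_left (h.trans hB)]
              ring
            · rw [max_eq_left h]
              ring
          have split1 := fin_sum_split hd (fun i => min (a' i) t)
          have split2 := fin_sum_split hd a'
          have tailEq : (∑ k ∈ Finset.Ico d n,
                (if h : k < n then min (a' ⟨k, h⟩) t else 0))
              = ∑ k ∈ Finset.Ico d n, (if h : k < n then a' ⟨k, h⟩ else 0) := by
            refine Finset.sum_congr rfl (fun k hk => ?_)
            obtain ⟨hk1, hk2⟩ := Finset.mem_Ico.mp hk
            rw [dif_pos hk2, dif_pos hk2, min_eq_left ((htail _ hk1).trans hB)]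
          have hs := Finset.sum_congr rfl (fun j (_ : j ∈ Finset.univ) => pw j)
          rw [Finset.sum_add_distrib, Finset.sum_sub_distrib] at hs
          rw [hs]
          linarith [g2]
    have hct : ct = min t c' := by
      have hL : a (Fin.castLE hd ⟨d - 1, by omega⟩) ≤ min t c' := Hlast
      have hL' : a (Fin.castLE hd ⟨d - 1, by omega⟩) ≤ ct := h1
      rcases le_total ct (min t c') with h | h
      · exact wf_level_unique hd0 (fun j => a (Fin.castLE hd j)) ct (min t c') h hL'
          (h2.trans Hsum.symm)
      · exact (wf_level_unique hd0 (fun j => a (Fin.castLE hd j)) (min t c') ct h hL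
          (Hsum.trans h2.symm)).symm
    rw [h3 i, hct, Hpt i]
end

section
/- Let a' = (a'_i)_{i=1}^n ∈ (ℝ_{≥0}^n)↓ with water-filling γ' in dimension d and water-level c'. If a'_1 ≥ c', then the truncated vector (a'_i)_{i=2}^n ∈ (ℝ_{≥0}^{n−1})↓ has water-filling in dimension d − 1 equal to (γ'_i)_{i=2}^d, with the same water-level c'. -/
/-- Truncation compatibility of the water-filling: if a'₁ ≥ c' then the
water-filling of (a'ᵢ)_{i≥2} in dimension d-1 is (γ'ᵢ)_{i≥2}, with the same
water-level c'. -/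
theorem stmt12 {n d : ℕ} (hd1 : 1 < d) (hd : d ≤ n)
    (a' : Fin n → ℝ) (ha : Antitone a') (ha0 : ∀ i, 0 ≤ a' i)
    (c' : ℝ) (γ' : Fin d → ℝ)
    (hwf : IsWaterFilling d (by omega) hd a' c' γ')
    (h1 : c' ≤ a' ⟨0, by omega⟩) :
    IsWaterFilling (d - 1) (by omega) (by omega)
      (fun i : Fin (n - 1) => a' ⟨(i : ℕ) + 1, by have := i.isLt; omega⟩) c'
      (fun i : Fin (d - 1) => γ' ⟨(i : ℕ) + 1, by have := i.isLt; omega⟩) := by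
  obtain ⟨hA, hS, hG⟩ := hwf
  obtain ⟨e, rfl⟩ : ∃ e, d = e + 1 := ⟨d - 1, by omega⟩
  obtain ⟨m, rfl⟩ : ∃ m, n = m + 1 := ⟨n - 1, by omega⟩
  refine ⟨?_, ?_, ?_⟩
  · have : e - 1 + 1 = e := by omega
    convert hA using 2
    exact Fin.ext (by simp; omega)
  · rw [Fin.sum_univ_succ, Fin.sum_univ_succ] at hS
    have h0 : max (a' (Fin.castLE hd 0)) c' = a' ⟨0, by omega⟩ := by
      have : Fin.castLE hd (0 : Fin (e+1)) = ⟨0, by omega⟩ := rfl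
      rw [this, max_eq_left h1]
    rw [h0] at hS
    have := hS
    have ha0' : a' (0 : Fin (m+1)) = a' ⟨0, by omega⟩ := rfl
    rw [ha0'] at this
    have key : (∑ i : Fin e, max (a' (Fin.castLE hd i.succ)) c')
        = ∑ i : Fin m, a' i.succ := by linarith
    calc (∑ i : Fin (e + 1 - 1), max (a' ⟨(Fin.castLE (by omega : e+1-1 ≤ m+1-1) i : ℕ) + 1, by have := (Fin.castLE (by omega : e+1-1 ≤ m+1-1) i).isLt; omega⟩) c')
        = ∑ i : Fin e, max (a' (Fin.castLE hd i.succ)) c' := by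
          apply Finset.sum_congr rfl
          intro i _
          congr 1
      _ = ∑ i : Fin m, a' i.succ := key
      _ = ∑ i : Fin (m + 1 - 1), a' ⟨(i:ℕ)+1, by have := i.isLt; omega⟩ := by
          apply Finset.sum_congr rfl
          intro i _
          congr 1
  · intro i
    have := hG ⟨(i:ℕ)+1, by omega⟩
    simp only [this]
    congr 1
end

section
/- Let a' ∈ (ℝ_{≥0}^n)↓ with water-filling γ' in dimension d and water-level c' > 0, and suppose a'_1 ≥ c'. Define a_i(t) = (min{t, c'}/c') · min{a'_i, max{t, c'}} for t ∈ [0, γ'_1]. If γ(t) = (γ_i(t))_{i=1}^d denotes the water-filling of (a_i(t))_{i=1}^n in dimension d, then γ_1(t) = a_1(t) = t for all t ∈ [0, γ'_1]. -/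
lemma sum_fin_trunc {n d : ℕ} (hd : d ≤ n) (g : Fin n → ℝ)
    (hg : ∀ i : Fin n, d ≤ (i : ℕ) → g i = 0) :
    ∑ i : Fin n, g i = ∑ i : Fin d, g (Fin.castLE hd i) := by
  classical
  have h2 : ∑ i : Fin d, g (Fin.castLE hd i)
      = ∑ i ∈ Finset.univ.map ⟨Fin.castLE hd, Fin.castLE_injective hd⟩, g i := by
    rw [Finset.sum_map]; rfl
  rw [eq_comm, h2]
  apply Finset.sum_subset (Finset.subset_univ _)
  intro x _ hx
  apply hg
  by_contra h
  push_neg at h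
  exact hx (Finset.mem_map.mpr ⟨⟨x, h⟩, Finset.mem_univ _, rfl⟩)

/-- If a'₁ ≥ c' > 0 then the largest entry of the water-filling of a(t)
equals a₁(t) = t, for all t ∈ [0, γ'₁]. -/
theorem stmt13 {n d : ℕ} (hd0 : 0 < d) (hd : d ≤ n)
    (a' : Fin n → ℝ) (ha : Antitone a') (ha0 : ∀ i, 0 ≤ a' i)
    (c' : ℝ) (hc' : 0 < c') (γ' : Fin d → ℝ)
    (hwf : IsWaterFilling d hd0 hd a' c' γ')
    (h1 : c' ≤ a' ⟨0, by omega⟩)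
    (t : ℝ) (ht0 : 0 ≤ t) (ht1 : t ≤ γ' ⟨0, hd0⟩)
    (ct : ℝ) (γt : Fin d → ℝ)
    (hwt : IsWaterFilling d hd0 hd
      (fun i => min t c' / c' * min (a' i) (max t c')) ct γt) :
    γt ⟨0, hd0⟩ = t ∧ min t c' / c' * min (a' ⟨0, by omega⟩) (max t c') = t := by
  obtain ⟨hd1, hsum, hγ⟩ := hwf
  obtain ⟨htd1, htsum, htγ⟩ := hwt
  have hc'ne : c' ≠ 0 := ne_of_gt hc'
  set s := min t c' / c' with hs
  set M := max t c' with hM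
  have hs0 : 0 ≤ s := div_nonneg (le_min ht0 hc'.le) hc'.le
  have hcM : c' ≤ M := le_max_right _ _
  have hsM : s * M = t := by
    rcases le_total t c' with h | h
    · rw [hs, hM, min_eq_left h, max_eq_right h, div_mul_cancel₀ _ hc'ne]
    · rw [hs, hM, min_eq_right h, max_eq_left h, div_self hc'ne, one_mul]
  -- a(t)_0 = t
  have ha0t : s * min (a' ⟨0, by omega⟩) M = t := by
    rcases le_total t c' with h | h
    · have hm : min (a' ⟨0, by omega⟩) M = M := by
        rw [hM, max_eq_right h]; exact min_eq_right h1
      rw [hm, hsM]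
    · have hta : t ≤ a' ⟨0, by omega⟩ := by
        have hγ0 := hγ ⟨0, hd0⟩
        rw [hγ0] at ht1
        have : Fin.castLE hd (⟨0, hd0⟩ : Fin d) = (⟨0, by omega⟩ : Fin n) := rfl
        rw [this, max_eq_left h1] at ht1
        exact ht1
      rw [hM, max_eq_left h, min_eq_right hta, hs, min_eq_right h, div_self hc'ne, one_mul]
  -- key bound : total mass of a(t) is at most d * t
  have key : ∑ i : Fin n, s * min (a' i) M ≤ d * t := by
    have hzero : ∀ i : Fin n, d ≤ (i : ℕ) → s * (min (a' i) M - a' i) = 0 := by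
      intro i hi
      have hle : a' i ≤ c' := by
        refine le_trans (ha ?_) hd1
        exact Fin.mk_le_mk.mpr (by omega)
      rw [min_eq_left (hle.trans hcM), sub_self, mul_zero]
    have hsplit : ∑ i : Fin n, s * (min (a' i) M - a' i)
        = ∑ i : Fin d, s * (min (a' (Fin.castLE hd i)) M - a' (Fin.castLE hd i)) :=
      sum_fin_trunc hd _ hzero
    have step1 : ∑ i : Fin n, s * min (a' i) M
        = (∑ i : Fin n, s * (min (a' i) M - a' i)) + s * ∑ i, a' i := by
      rw [Finset.mul_sum, ← Finset.sum_add_distrib]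
      exact Finset.sum_congr rfl (fun i _ => by ring)
    have step2 : s * ∑ i, a' i = ∑ i : Fin d, s * max (a' (Fin.castLE hd i)) c' := by
      rw [← hsum, Finset.mul_sum]
    have hterm : ∀ i : Fin d,
        s * (min (a' (Fin.castLE hd i)) M - a' (Fin.castLE hd i))
          + s * max (a' (Fin.castLE hd i)) c' ≤ t := by
      intro i
      set b := a' (Fin.castLE hd i) with hb
      rcases le_total b M with h | h
      · rw [min_eq_left h, sub_self, mul_zero, zero_add]
        calc s * max b c' ≤ s * M := mul_le_mul_of_nonneg_left (max_le h hcM) hs0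
          _ = t := hsM
      · rw [min_eq_right h, max_eq_left (hcM.trans h)]
        have : s * (M - b) + s * b = s * M := by ring
        rw [this, hsM]
    calc ∑ i : Fin n, s * min (a' i) M
        = (∑ i : Fin n, s * (min (a' i) M - a' i)) + s * ∑ i, a' i := step1
      _ = ∑ i : Fin d, (s * (min (a' (Fin.castLE hd i)) M - a' (Fin.castLE hd i))
            + s * max (a' (Fin.castLE hd i)) c') := by
          rw [hsplit, step2, Finset.sum_add_distrib]
      _ ≤ ∑ _i : Fin d, t := Finset.sum_le_sum (fun i _ => hterm i)
      _ = d * t := by rw [Finset.sum_const, Finset.card_univ, Fintype.card_fin,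
            nsmul_eq_mul]
  -- ct ≤ t
  have hct : ct ≤ t := by
    have hlb : (d : ℝ) * ct ≤ ∑ i : Fin d, max (s * min (a' (Fin.castLE hd i)) M) ct := by
      have := Finset.card_nsmul_le_sum Finset.univ
        (fun i : Fin d => max (s * min (a' (Fin.castLE hd i)) M) ct) ct
        (fun i _ => le_max_right _ _)
      simpa [nsmul_eq_mul] using this
    have heq : ∑ i : Fin d, max (s * min (a' (Fin.castLE hd i)) M) ct
        = ∑ i : Fin n, s * min (a' i) M := htsum
    have : (d : ℝ) * ct ≤ (d : ℝ) * t := by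
      calc (d : ℝ) * ct ≤ _ := hlb
        _ = ∑ i : Fin n, s * min (a' i) M := heq
        _ ≤ d * t := key
    exact le_of_mul_le_mul_left this (by exact_mod_cast hd0)
  refine ⟨?_, ha0t⟩
  have := htγ ⟨0, hd0⟩
  rw [this]
  show max (s * min (a' (Fin.castLE hd ⟨0, hd0⟩)) M) ct = t
  have hcast : Fin.castLE hd (⟨0, hd0⟩ : Fin d) = (⟨0, by omega⟩ : Fin n) := rfl
  rw [hcast, ha0t, max_eq_left hct]
end

section
/- Fix n, m with dimensions d₁ ≥ … ≥ d_m, d₁ ≤ n, and α ∈ (ℝ_{>0}^n)↓. Suppose Φ^op = (ℱ_j^op)_{j=1}^m ∈ 𝒟(α,d) is such that Λ_{Φ^op}↓ = (γ_ℓ·1_{r_ℓ})_{ℓ=1}^p with γ₁ > … > γ_p > 0, breakpoints 0 = g₀ < g₁ < … < g_p = d₁, r_ℓ = ∑_{j=1}^m (min{g_ℓ, d_j} − g_{ℓ−1})^+, and r_ℓ·γ_ℓ = ∑_{i=g_{ℓ−1}+1}^{g_ℓ} α_i for ℓ < p, r_p·γ_p = ∑_{i=g_{p−1}+1}^{n}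 α_i. Then for every Φ = (ℱ_j)_{j=1}^m ∈ 𝒟(α,d), one has Λ_{Φ^op} ≺ Λ_Φ. -/
/-- squared norm of a vector in ℂ^k -/
noncomputable def sqNorm {k : ℕ} (v : Fin k → ℂ) : ℝ := ∑ a, Complex.normSq (v a)

/-- frame operator S = ∑ fᵢ ⊗ fᵢ as a matrix -/
noncomputable def frameOp {k n : ℕ} (f : Fin n → Fin k → ℂ) : Matrix (Fin k) (Fin k) ℂ :=
  ∑ i, Matrix.of fun a b => f i a * (starRingEnd ℂ) (f i b)

theorem frameOp_isHermitian {k n : ℕ} (f : Fin n → Fin k → ℂ) :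
    (frameOp f).IsHermitian := by
  unfold frameOp Matrix.IsHermitian
  ext a b
  simp [Matrix.conjTranspose_apply, Matrix.sum_apply, mul_comm]

/-- the eigenvalues of the frame operator, in non-increasing order -/
noncomputable def spec {k n : ℕ} (f : Fin n → Fin k → ℂ) : Fin k → ℝ :=
  decr ((frameOp_isHermitian f).eigenvalues)

/-- sum of the k largest entries of x (capped at the total). -/
noncomputable def ksum {ι : Type*} [Fintype ι] [DecidableEq ι] (x : ι → ℝ) (k : ℕ) : ℝ :=
  ((Finset.univ.powersetCard (min k (Fintype.card ι))).image fun S => ∑ i ∈ S, x i).max'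
    (Finset.image_nonempty.mpr
      (Finset.powersetCard_nonempty.mpr (by rw [Finset.card_univ]; exact min_le_right _ _)))

/-- majorization between real tuples indexed by (possibly different) finite types. -/
def MajF {ι κ : Type*} [Fintype ι] [DecidableEq ι] [Fintype κ] [DecidableEq κ]
    (x : ι → ℝ) (y : κ → ℝ) : Prop :=
  (∀ k : ℕ, ksum x k ≤ ksum y k) ∧ (∑ i, x i) = ∑ j, y j

/-!
Write `x = Λ_{Φ^op}`, `y = Λ_Φ`, and `ksum v k` for the sum of the `k` largest entries of `v`.
Both vectors have total `∑ α` (the trace of the frame operators). Since `x` takes the value `γ_ℓ`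
with multiplicity `r_ℓ`, `k ↦ ksum x k` lies below the piecewise-linear function with vertices
`(R_L, C_L)`, `R_L = r_1 + ⋯ + r_L`, `C_L = r_1 γ_1 + ⋯ + r_L γ_L`. The function `k ↦ ksum y k`
is concave, being the minimum over `θ ≥ 0` of the affine functions `θ k + ∑ (y_i - θ)⁺`, so it
suffices to check `C_L ≤ ksum y R_L` at the vertices. The block equations give
`C_L = ∑_{i < g_L} α_i = ∑_j ∑_{i < g_L} ‖f_{ij}‖²` and `R_L = ∑_j min (g_L, d_j)`. By the Ky Fan
(Schur–Horn) inequality the `j`-th inner sum is at most the sum of the `min (g_L, d_j)` largest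
eigenvalues of `S_{ℱ_j}`, and these blocks together form `R_L` entries of `y`.
-/

open Finset

lemma sum_le_mul_card_add_sum_posPart {ι : Type*} [Fintype ι] (x : ι → ℝ) (S : Finset ι) (θ : ℝ) :
    ∑ i ∈ S, x i ≤ θ * #S + ∑ i, max (x i - θ) 0 :=
  calc ∑ i ∈ S, x i ≤ ∑ i ∈ S, (θ + max (x i - θ) 0) :=
        sum_le_sum fun i _ => by linarith [le_max_left (x i - θ) 0]
    _ = θ * #S + ∑ i ∈ S, max (x i - θ) 0 := by
        rw [sum_add_distrib, sum_const, nsmul_eq_mul, mul_comm]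
    _ ≤ θ * #S + ∑ i, max (x i - θ) 0 := add_le_add_right
        (sum_le_sum_of_subset_of_nonneg (subset_univ S) fun i _ _ => le_max_right _ _) _

section ksum

variable {ι : Type*} [Fintype ι] [DecidableEq ι] (x : ι → ℝ)

lemma sum_le_ksum {S : Finset ι} {k : ℕ} (h : #S = min k (Fintype.card ι)) :
    ∑ i ∈ S, x i ≤ ksum x k := by
  unfold ksum
  apply le_max'
  exact mem_image_of_mem (fun S : Finset ι => ∑ i ∈ S, x i)
    (mem_powersetCard.mpr ⟨subset_univ S, h⟩)

lemma exists_ksum_eq_sum (k : ℕ) :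
    ∃ S : Finset ι, #S = min k (Fintype.card ι) ∧ ksum x k = ∑ i ∈ S, x i := by
  unfold ksum
  generalize_proofs hne
  obtain ⟨S, hS, hsum⟩ := mem_image.mp (max'_mem _ hne)
  exact ⟨S, (mem_powersetCard.mp hS).2, hsum.symm⟩

lemma ksum_zero : ksum x 0 = 0 := by
  obtain ⟨S, hS, hsum⟩ := exists_ksum_eq_sum x 0
  have : S = ∅ := card_eq_zero.mp (by simpa using hS)
  rw [hsum, this, sum_empty]

lemma ksum_eq_sum_of_card_le {k : ℕ} (hk : Fintype.card ι ≤ k) : ksum x k = ∑ i, x i := by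
  obtain ⟨S, hS, hsum⟩ := exists_ksum_eq_sum x k
  rw [hsum, eq_univ_of_card S (by omega)]

lemma ksum_min_card (k : ℕ) : ksum x (min k (Fintype.card ι)) = ksum x k := by
  obtain ⟨S, hS, hsum⟩ := exists_ksum_eq_sum x k
  obtain ⟨S', hS', hsum'⟩ := exists_ksum_eq_sum x (min k (Fintype.card ι))
  rw [min_assoc, min_self] at hS'
  exact le_antisymm (hsum' ▸ sum_le_ksum x hS')
    (hsum ▸ sum_le_ksum x (by rwa [min_assoc, min_self]))

lemma ksum_comp_equiv_le {κ : Type*} [Fintype κ] [DecidableEq κ] (e : κ ≃ ι) (k : ℕ) :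
    ksum (x ∘ e) k ≤ ksum x k := by
  obtain ⟨S, hS, hsum⟩ := exists_ksum_eq_sum (x ∘ e) k
  rw [hsum]
  exact (sum_map S e.toEmbedding x).symm.trans_le
    (sum_le_ksum x (by rw [card_map, hS, Fintype.card_congr e]))

lemma ksum_comp_equiv {κ : Type*} [Fintype κ] [DecidableEq κ] (e : κ ≃ ι) (k : ℕ) :
    ksum (x ∘ e) k = ksum x k :=
  (ksum_comp_equiv_le x e k).antisymm <| by
    simpa [Function.comp_def] using ksum_comp_equiv_le (x ∘ e) e.symm k

lemma ksum_le_mul_add_sum_posPart {θ : ℝ} (hθ : 0 ≤ θ) (k : ℕ) :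
    ksum x k ≤ θ * k + ∑ i, max (x i - θ) 0 := by
  obtain ⟨S, hS, hsum⟩ := exists_ksum_eq_sum x k
  have hSk : (#S : ℝ) ≤ k := by rw [hS]; exact_mod_cast min_le_left k (Fintype.card ι)
  rw [hsum]
  nlinarith [sum_le_mul_card_add_sum_posPart x S θ]

lemma exists_ksum_eq_mul_add_sum_posPart (hx : ∀ i, 0 ≤ x i) (k : ℕ) :
    ∃ θ, 0 ≤ θ ∧ ksum x k = θ * k + ∑ i, max (x i - θ) 0 := by
  rcases le_or_gt (Fintype.card ι) k with hk | hk
  · exact ⟨0, le_rfl, by simp [ksum_eq_sum_of_card_le x hk, max_eq_left (hx _)]⟩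
  obtain ⟨S, hS, hsum⟩ := exists_ksum_eq_sum x k
  rw [min_eq_left hk.le] at hS
  obtain ⟨t, ht, hmax⟩ := Sᶜ.exists_max_image x (by rw [← card_pos, card_compl]; omega)
  have hle : ∀ s ∈ S, x t ≤ x s := by
    intro s hs
    by_contra! hlt
    have hts : t ∉ S.erase s := fun h => mem_compl.mp ht (mem_of_mem_erase h)
    have := sum_le_ksum x (S := insert t (S.erase s)) (k := k)
      (by rw [card_insert_of_notMem hts, card_erase_of_mem hs, min_eq_left hk.le, hS]
          have := card_pos.mpr ⟨s, hs⟩; omega)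
    rw [sum_insert hts, hsum, ← add_sum_erase S x hs] at this
    linarith
  refine ⟨x t, hx t, ?_⟩
  rw [← sum_add_sum_compl S, sum_congr rfl fun s hs => max_eq_left (sub_nonneg.mpr (hle s hs)),
    sum_congr rfl fun j hj => max_eq_right (sub_nonpos.mpr (hmax j hj)), hsum, sum_sub_distrib,
    sum_const, hS]
  simp only [sum_const_zero, nsmul_eq_mul]
  ring

lemma ksum_add_ksum_add_two_le (hx : ∀ i, 0 ≤ x i) (k : ℕ) :
    ksum x k + ksum x (k + 2) ≤ 2 * ksum x (k + 1) := by
  obtain ⟨θ, hθ, h⟩ := exists_ksum_eq_mul_add_sum_posPart x hx (k + 1)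
  have h0 := ksum_le_mul_add_sum_posPart x hθ k
  have h2 := ksum_le_mul_add_sum_posPart x hθ (k + 2)
  rw [h]
  push_cast at h2 ⊢
  linarith

lemma sum_mul_le_ksum (hx : ∀ i, 0 ≤ x i) {c : ι → ℝ} (hc0 : ∀ i, 0 ≤ c i) (hc1 : ∀ i, c i ≤ 1)
    {k : ℕ} (hck : ∑ i, c i ≤ k) : ∑ i, x i * c i ≤ ksum x k := by
  obtain ⟨θ, hθ, h⟩ := exists_ksum_eq_mul_add_sum_posPart x hx k
  have key : ∀ i, x i * c i ≤ θ * c i + max (x i - θ) 0 := fun i => by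
    rcases le_total θ (x i) with hθi | hθi
    · rw [max_eq_left (sub_nonneg.mpr hθi)]
      nlinarith [hc1 i]
    · nlinarith [hc0 i, le_max_right (x i - θ) 0]
  calc ∑ i, x i * c i ≤ ∑ i, (θ * c i + max (x i - θ) 0) := sum_le_sum fun i _ => key i
    _ = θ * ∑ i, c i + ∑ i, max (x i - θ) 0 := by rw [sum_add_distrib, mul_sum]
    _ ≤ ksum x k := by rw [h]; gcongr

end ksum

lemma sum_ksum_le_ksum_sigma {J : Type*} [Fintype J] [DecidableEq J] {κ : J → Type*}
    [∀ j, Fintype (κ j)] [∀ j, DecidableEq (κ j)] (y : (j : J) → κ j → ℝ) (k : J → ℕ)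
    (hk : ∀ j, k j ≤ Fintype.card (κ j)) :
    ∑ j, ksum (y j) (k j) ≤ ksum (fun s : Σ j, κ j => y s.1 s.2) (∑ j, k j) := by
  choose S hS hsum using fun j => exists_ksum_eq_sum (y j) (k j)
  calc ∑ j, ksum (y j) (k j) = ∑ s ∈ univ.sigma S, y s.1 s.2 := by
        rw [sum_sigma]; exact sum_congr rfl fun j _ => hsum j
    _ ≤ _ := sum_le_ksum _ <| by
        rw [card_sigma, Fintype.card_sigma, min_eq_left (sum_le_sum fun j _ => hk j)]
        exact sum_congr rfl fun j _ => (hS j).trans (min_eq_left (hk j))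

lemma line_le_of_concave {F : ℕ → ℝ} (hF : ∀ k, F k + F (k + 2) ≤ 2 * F (k + 1)) {a b k : ℕ}
    (hak : a ≤ k) (hkb : k ≤ b) {c s : ℝ} (ha : c ≤ F a) (hb : c + s * ((b : ℝ) - a) ≤ F b) :
    c + s * ((k : ℝ) - a) ≤ F k := by
  set D : ℕ → ℝ := fun j => F (j + 1) - F j
  have hD : Antitone D := antitone_nat_of_succ_le fun j => by simp only [D]; linarith [hF j]
  have hleft : ((k : ℝ) - a) * D k ≤ F k - F a := by
    rw [← sum_Ico_sub F hak, ← Nat.cast_sub hak, ← Nat.card_Ico, ← nsmul_eq_mul]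
    exact card_nsmul_le_sum _ _ _ fun j hj => hD (mem_Ico.mp hj).2.le
  have hright : F b - F k ≤ ((b : ℝ) - k) * D k := by
    rw [← sum_Ico_sub F hkb, ← Nat.cast_sub hkb, ← Nat.card_Ico, ← nsmul_eq_mul]
    exact sum_le_card_nsmul _ _ _ fun j hj => hD (mem_Ico.mp hj).1
  rcases eq_or_lt_of_le hak with rfl | hak'
  · simpa using ha
  have hak'' : (0 : ℝ) < (k : ℝ) - a := sub_pos.mpr (by exact_mod_cast hak')
  have hkb' : (0 : ℝ) ≤ (b : ℝ) - k := sub_nonneg.mpr (by exact_mod_cast hkb)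
  nlinarith [mul_le_mul_of_nonneg_left hleft hkb', mul_le_mul_of_nonneg_left hright hak''.le]

lemma Fin.partialSum_eq_sum_filter {M : Type*} [AddCommMonoid M] {p : ℕ} (a : Fin p → M)
    (L : Fin (p + 1)) : Fin.partialSum a L = ∑ ℓ with ℓ.castSucc < L, a ℓ := by
  induction L using Fin.induction with
  | zero => simp
  | succ ℓ ih =>
    rw [Fin.partialSum_succ, ih]
    simp only [Fin.castSucc_lt_castSucc_iff, Fin.castSucc_lt_succ_iff]
    rw [filter_gt_eq_Iio, filter_ge_eq_Iic, sum_Iio_add_eq_sum_Iic]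

lemma Fin.partialSum_eq_of_succ {M : Type*} [AddCommMonoid M] {p : ℕ} {a : Fin p → M}
    {f : Fin (p + 1) → M} (h0 : f 0 = 0) {L : Fin (p + 1)}
    (hsucc : ∀ ℓ : Fin p, ℓ.succ ≤ L → f ℓ.succ = f ℓ.castSucc + a ℓ) :
    Fin.partialSum a L = f L := by
  induction L using Fin.induction with
  | zero => simp [h0]
  | succ ℓ ih =>
    rw [Fin.partialSum_succ, ih fun ℓ' h => hsucc ℓ' (h.trans (Fin.castSucc_le_succ ℓ)),
      hsucc ℓ le_rfl]

lemma Fin.partialSum_last {M : Type*} [AddCommMonoid M] {p : ℕ} (a : Fin p → M) :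
    Fin.partialSum a (Fin.last p) = ∑ ℓ, a ℓ := by
  simp [Fin.partialSum_eq_sum_filter, Fin.castSucc_lt_last]

lemma sum_comp_eq_sum_card_mul {ι κ : Type*} [Fintype ι] [Fintype κ] {x : ι → ℝ} {γ : κ → ℝ}
    (hγ : Function.Injective γ) (hx : ∀ i, ∃ ℓ, x i = γ ℓ) (φ : ℝ → ℝ) :
    ∑ i, φ (x i) = ∑ ℓ, (#{i | x i = γ ℓ} : ℝ) * φ (γ ℓ) := by
  classical
  rw [← sum_fiberwise_of_maps_to (t := univ.image γ) fun i _ => by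
      obtain ⟨ℓ, h⟩ := hx i; exact h ▸ mem_image_of_mem γ (mem_univ ℓ),
    sum_image fun _ _ _ _ h => hγ h]
  refine sum_congr rfl fun ℓ _ => ?_
  rw [sum_congr rfl fun i hi => by rw [(mem_filter.mp hi).2], sum_const, nsmul_eq_mul]

lemma sum_mul_max_sub_eq {p : ℕ} {γ : Fin p → ℝ} (hγ : Antitone γ) (w : Fin p → ℝ) (ℓ : Fin p) :
    ∑ ℓ', w ℓ' * max (γ ℓ' - γ ℓ) 0 =
      Fin.partialSum (fun ℓ' => w ℓ' * γ ℓ') ℓ.castSucc - γ ℓ * Fin.partialSum w ℓ.castSucc := by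
  simp only [Fin.partialSum_eq_sum_filter, Fin.castSucc_lt_castSucc_iff, mul_sum, ← sum_sub_distrib]
  rw [sum_filter]
  refine sum_congr rfl fun ℓ' _ => ?_
  split_ifs with h
  · rw [max_eq_left (sub_nonneg.mpr (hγ h.le))]; ring
  · rw [max_eq_right (sub_nonpos.mpr (hγ (not_lt.mp h))), mul_zero]

lemma le_of_concave_of_partialSum_le {E F : ℕ → ℝ} (hF : ∀ k, F k + F (k + 2) ≤ 2 * F (k + 1))
    (h0 : E 0 ≤ F 0) {p : ℕ} (r : Fin p → ℕ) (γ : Fin p → ℝ)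
    (hE : ∀ ℓ k, E k ≤ Fin.partialSum (fun ℓ => (r ℓ : ℝ) * γ ℓ) ℓ.castSucc
      + γ ℓ * ((k : ℝ) - Fin.partialSum r ℓ.castSucc))
    (hC : ∀ L, Fin.partialSum (fun ℓ => (r ℓ : ℝ) * γ ℓ) L ≤ F (Fin.partialSum r L))
    {k : ℕ} (hk : k ≤ Fin.partialSum r (Fin.last p)) : E k ≤ F k := by
  suffices ∀ L k, k ≤ Fin.partialSum r L → E k ≤ F k from this _ k hk
  intro L
  induction L using Fin.induction with
  | zero => intro k hk; rw [Fin.partialSum_zero] at hk; rwa [Nat.le_zero.mp hk]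
  | succ ℓ ih =>
    intro k hk
    rcases le_or_gt k (Fin.partialSum r ℓ.castSucc) with hkℓ | hkℓ
    · exact ih k hkℓ
    rw [Fin.partialSum_succ] at hk
    refine (hE ℓ k).trans (line_le_of_concave hF hkℓ.le hk (hC ℓ.castSucc) ?_)
    have := hC ℓ.succ
    rw [Fin.partialSum_succ, Fin.partialSum_succ] at this
    push_cast at this ⊢
    linarith

theorem majF_of_partialSum_le_ksum {ι : Type*} [Fintype ι] [DecidableEq ι] {x y : ι → ℝ}
    (hy : ∀ i, 0 ≤ y i) (hsum : ∑ i, x i = ∑ i, y i) {p : ℕ} {γ : Fin p → ℝ}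
    (hγ : StrictAnti γ) (hγ0 : ∀ ℓ, 0 ≤ γ ℓ) (r : Fin p → ℕ) (hx : ∀ i, ∃ ℓ, x i = γ ℓ)
    (hr : ∀ ℓ, #{i | x i = γ ℓ} = r ℓ)
    (hC : ∀ ℓ : Fin p, Fin.partialSum (fun ℓ => (r ℓ : ℝ) * γ ℓ) ℓ.castSucc
      ≤ ksum y (Fin.partialSum r ℓ.castSucc)) :
    MajF x y := by
  have hlevels := sum_comp_eq_sum_card_mul hγ.injective hx
  simp only [hr] at hlevels
  have hcard : Fintype.card ι = Fin.partialSum r (Fin.last p) := by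
    have := hlevels fun _ => 1
    simp only [sum_const, card_univ, nsmul_eq_mul, mul_one] at this
    rw [Fin.partialSum_last]
    exact_mod_cast this
  have hCR : ∀ L, Fin.partialSum (fun ℓ => (r ℓ : ℝ) * γ ℓ) L ≤ ksum y (Fin.partialSum r L) := by
    refine Fin.lastCases (le_of_eq ?_) hC
    rw [← hcard, ksum_eq_sum_of_card_le y le_rfl, ← hsum, Fin.partialSum_last]
    simpa using (hlevels id).symm
  have hline : ∀ ℓ k, ksum x k ≤ Fin.partialSum (fun ℓ => (r ℓ : ℝ) * γ ℓ) ℓ.castSucc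
      + γ ℓ * ((k : ℝ) - Fin.partialSum r ℓ.castSucc) := fun ℓ k => by
    have h := ksum_le_mul_add_sum_posPart x (hγ0 ℓ) k
    rw [hlevels fun t => max (t - γ ℓ) 0, sum_mul_max_sub_eq hγ.antitone] at h
    have hcast : ((Fin.partialSum r ℓ.castSucc : ℕ) : ℝ)
        = Fin.partialSum (fun ℓ => (r ℓ : ℝ)) ℓ.castSucc := by
      simp [Fin.partialSum_eq_sum_filter]
    rw [hcast]
    linarith
  refine ⟨fun k => ?_, hsum⟩
  rcases le_or_gt k (Fintype.card ι) with hk | hk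
  · exact le_of_concave_of_partialSum_le (ksum_add_ksum_add_two_le y hy)
      (by rw [ksum_zero, ksum_zero]) r γ hline hCR (hcard ▸ hk)
  · rw [ksum_eq_sum_of_card_le x hk.le, ksum_eq_sum_of_card_le y hk.le, hsum]

section Frame

open scoped InnerProductSpace

variable {𝕜 E ι κ : Type*} [RCLike 𝕜] [NormedAddCommGroup E] [InnerProductSpace 𝕜 E]
  [Fintype ι] [Fintype κ] {u : OrthonormalBasis κ 𝕜 E} {μ : κ → ℝ} {F : ι → E}

lemma sum_norm_inner_sq_eq (heig : ∀ t, ∑ i, ⟪F i, u t⟫_𝕜 • F i = (μ t : 𝕜) • u t) (v : E) :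
    ∑ i, ‖⟪F i, v⟫_𝕜‖ ^ 2 = ∑ t, μ t * ‖⟪u t, v⟫_𝕜‖ ^ 2 := by
  have hS : ∑ i, ⟪F i, v⟫_𝕜 • F i = ∑ t, ⟪u t, v⟫_𝕜 • (μ t : 𝕜) • u t := by
    conv_lhs => rw [← u.sum_repr' v]
    simp_rw [inner_sum, inner_smul_right, sum_smul, mul_smul]
    rw [sum_comm]
    simp_rw [← smul_sum, heig]
  have h := congrArg (fun w => ⟪v, w⟫_𝕜) hS
  simp only [inner_sum, inner_smul_right] at h
  apply RCLike.ofReal_injective (K := 𝕜)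
  push_cast
  convert h using 2 with i _ t _
  · rw [← inner_conj_symm v (F i), RCLike.mul_conj]
  · rw [← inner_conj_symm v (u t), ← mul_assoc, mul_comm _ (μ t : 𝕜), mul_assoc, RCLike.mul_conj]

lemma eq_sum_norm_inner_sq (heig : ∀ t, ∑ i, ⟪F i, u t⟫_𝕜 • F i = (μ t : 𝕜) • u t) (t : κ) :
    μ t = ∑ i, ‖⟪F i, u t⟫_𝕜‖ ^ 2 := by
  classical
  rw [sum_norm_inner_sq_eq heig, sum_eq_single t]
  · simp [u.orthonormal.1 t]
  · intro s _ hst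
    simp [u.orthonormal.2 hst]
  · simp

lemma sum_eq_sum_norm_sq (heig : ∀ t, ∑ i, ⟪F i, u t⟫_𝕜 • F i = (μ t : 𝕜) • u t) :
    ∑ t, μ t = ∑ i, ‖F i‖ ^ 2 := by
  simp_rw [eq_sum_norm_inner_sq heig, ← u.sum_sq_norm_inner_left]
  exact sum_comm

lemma sum_norm_sq_le_ksum [DecidableEq κ] (heig : ∀ t, ∑ i, ⟪F i, u t⟫_𝕜 • F i = (μ t : 𝕜) • u t)
    (T : Finset ι) {k : ℕ} (hT : #T ≤ k) : ∑ i ∈ T, ‖F i‖ ^ 2 ≤ ksum μ k := by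
  classical
  let V := Submodule.span 𝕜 (T.image F : Set E)
  let e := stdOrthonormalBasis 𝕜 V
  let w : Fin (Module.finrank 𝕜 V) → E := fun s => e s
  have hw : Orthonormal 𝕜 w := e.orthonormal.comp_linearIsometry V.subtypeₗᵢ
  have hparseval : ∀ i ∈ T, ‖F i‖ ^ 2 = ∑ s, ‖⟪w s, F i⟫_𝕜‖ ^ 2 := fun i hi =>
    (e.sum_sq_norm_inner_right ⟨F i, Submodule.subset_span (mem_image_of_mem F hi)⟩).symm
  -- `c t` is the weight of the eigenvector `u t` in `V`: `0 ≤ c ≤ 1` and `∑ c = dim V ≤ k`.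
  let c : κ → ℝ := fun t => ∑ s, ‖⟪w s, u t⟫_𝕜‖ ^ 2
  have hc1 : ∀ t, c t ≤ 1 := fun t => by
    simpa [u.orthonormal.1 t] using hw.sum_inner_products_le (u t) (s := univ)
  have hck : ∑ t, c t ≤ k := by
    have hdim : Module.finrank 𝕜 V ≤ k :=
      (finrank_span_finset_le_card _).trans (card_image_le.trans hT)
    calc ∑ t, c t = ∑ s, ‖w s‖ ^ 2 := by
          rw [sum_comm]; simp_rw [norm_inner_symm, u.sum_sq_norm_inner_right]
      _ = Module.finrank 𝕜 V := by simp [hw.1]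
      _ ≤ k := by exact_mod_cast hdim
  calc ∑ i ∈ T, ‖F i‖ ^ 2 = ∑ i ∈ T, ∑ s, ‖⟪w s, F i⟫_𝕜‖ ^ 2 := sum_congr rfl hparseval
    _ ≤ ∑ i, ∑ s, ‖⟪w s, F i⟫_𝕜‖ ^ 2 :=
        sum_le_sum_of_subset_of_nonneg (subset_univ T) fun _ _ _ => by positivity
    _ = ∑ t, μ t * c t := by
        rw [sum_comm]
        simp_rw [c, mul_sum]
        rw [sum_comm (s := univ (α := κ))]
        refine sum_congr rfl fun s _ => ?_
        simp_rw [norm_inner_symm (w s)]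
        exact sum_norm_inner_sq_eq heig (w s)
    _ ≤ ksum μ k := sum_mul_le_ksum μ (fun t => (eq_sum_norm_inner_sq heig t).symm ▸ by positivity)
        (fun t => by positivity) hc1 hck

end Frame

section frameOp

open scoped InnerProductSpace

variable {k n : ℕ} (f : Fin n → Fin k → ℂ)

lemma sum_inner_smul_eigenvectorBasis (t : Fin k) :
    ∑ i, ⟪WithLp.toLp 2 (f i), (frameOp_isHermitian f).eigenvectorBasis t⟫_ℂ • WithLp.toLp 2 (f i)
      = ((frameOp_isHermitian f).eigenvalues t : ℂ) •
          (frameOp_isHermitian f).eigenvectorBasis t := by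
  apply WithLp.ofLp_injective 2
  rw [WithLp.ofLp_smul, Complex.coe_smul, ← (frameOp_isHermitian f).mulVec_eigenvectorBasis]
  ext a
  simp only [WithLp.ofLp_sum, WithLp.ofLp_smul, Finset.sum_apply, Pi.smul_apply, smul_eq_mul,
    PiLp.inner_apply, RCLike.inner_apply, Matrix.mulVec, dotProduct, frameOp, Matrix.sum_apply,
    Matrix.of_apply, sum_mul]
  rw [sum_comm]
  exact sum_congr rfl fun i _ => sum_congr rfl fun b _ => by ring

lemma sqNorm_eq_norm_sq (v : Fin k → ℂ) : sqNorm v = ‖WithLp.toLp 2 v‖ ^ 2 := by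
  simp [sqNorm, EuclideanSpace.norm_sq_eq, Complex.normSq_eq_norm_sq]

lemma spec_eq_comp : spec f = (frameOp_isHermitian f).eigenvalues ∘
    (Fin.revPerm.trans (Tuple.sort (frameOp_isHermitian f).eigenvalues)) := rfl

lemma spec_nonneg (t : Fin k) : 0 ≤ spec f t := by
  rw [spec_eq_comp, Function.comp_apply, eq_sum_norm_inner_sq
    (μ := (frameOp_isHermitian f).eigenvalues) (sum_inner_smul_eigenvectorBasis f)]
  positivity

lemma sum_spec : ∑ t, spec f t = ∑ i, sqNorm (f i) := by
  simp only [spec_eq_comp, Function.comp_apply]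
  rw [Equiv.sum_comp, sum_eq_sum_norm_sq
    (μ := (frameOp_isHermitian f).eigenvalues) (sum_inner_smul_eigenvectorBasis f)]
  simp_rw [sqNorm_eq_norm_sq]

lemma sum_sqNorm_le_ksum_spec (T : Finset (Fin n)) {k' : ℕ} (hT : #T ≤ k') :
    ∑ i ∈ T, sqNorm (f i) ≤ ksum (spec f) k' := by
  rw [spec_eq_comp, ksum_comp_equiv]
  simp_rw [sqNorm_eq_norm_sq]
  exact sum_norm_sq_le_ksum (sum_inner_smul_eigenvectorBasis f) T hT

end frameOp

section design

variable {n m : ℕ} {d : Fin m → ℕ} {α : Fin n → ℝ} {Φ : (j : Fin m) → Fin n → Fin (d j) → ℂ}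

lemma sum_spec_sigma (hΦ : ∀ i, ∑ j, sqNorm (Φ j i) = α i) :
    ∑ s : Σ j, Fin (d j), spec (Φ s.1) s.2 = ∑ i, α i := by
  rw [← univ_sigma_univ, sum_sigma]
  simp only [sum_spec]
  rw [sum_comm]
  simp_rw [hΦ]

lemma sum_le_ksum_spec_sigma (hΦ : ∀ i, ∑ j, sqNorm (Φ j i) = α i) (T : Finset (Fin n)) {k : ℕ}
    (hT : #T ≤ k) :
    ∑ i ∈ T, α i ≤ ksum (fun s : Σ j, Fin (d j) => spec (Φ s.1) s.2) (∑ j, min k (d j)) :=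
  calc ∑ i ∈ T, α i = ∑ j, ∑ i ∈ T, sqNorm (Φ j i) := by simp_rw [← hΦ]; exact sum_comm
    _ ≤ ∑ j, ksum (spec (Φ j)) (min k (d j)) := sum_le_sum fun j _ => by
        have h := ksum_min_card (spec (Φ j)) k
        rw [Fintype.card_fin] at h
        exact h ▸ sum_sqNorm_le_ksum_spec (Φ j) T hT
    _ ≤ _ := sum_ksum_le_ksum_sigma (fun j => spec (Φ j)) _ fun j => by simp

end design

lemma sum_filter_val_lt_add {M : Type*} [AddCommMonoid M] {n : ℕ} (f : Fin n → M) {a b : ℕ}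
    (hab : a ≤ b) :
    ∑ i ∈ univ.filter (fun i : Fin n => (i : ℕ) < a), f i
      + ∑ i ∈ univ.filter (fun i : Fin n => a ≤ (i : ℕ) ∧ (i : ℕ) < b), f i
      = ∑ i ∈ univ.filter (fun i : Fin n => (i : ℕ) < b), f i := by
  rw [← sum_union (disjoint_filter.mpr fun i _ h1 h2 => by omega)]
  congr 1
  ext i
  simp only [mem_union, mem_filter, mem_univ, true_and]
  omega

/-- A design Φ^op whose spectra form the block-constant vector
(γ_ℓ 1_{r_ℓ})_ℓ described by the breakpoints g and satisfying the block-mass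
equations majorizes-minimally: Λ_{Φ^op} ≺ Λ_Φ for every (α,d)-design Φ. -/
theorem stmt16 {n m : ℕ}
    (α : Fin n → ℝ)
    (d : Fin m → ℕ)
    (Φop : (j : Fin m) → Fin n → Fin (d j) → ℂ)
    (hop : ∀ i, (∑ j, sqNorm (Φop j i)) = α i)
    (p : ℕ)
    (γ : Fin p → ℝ) (hγ : StrictAnti γ) (hγ0 : ∀ ℓ, 0 < γ ℓ)
    (g : Fin (p + 1) → ℕ) (hg0 : g 0 = 0) (hgmono : StrictMono g)
    (r : Fin p → ℕ)
    (hr : ∀ ℓ : Fin p, r ℓ = ∑ j, (min (g ℓ.succ) (d j) - g ℓ.castSucc))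
    (hspec : ∀ jq : Σ j : Fin m, Fin (d j), ∃ ℓ, spec (Φop jq.1) jq.2 = γ ℓ)
    (hcount : ∀ ℓ : Fin p,
      (Finset.univ.filter (fun jq : Σ j : Fin m, Fin (d j) =>
        spec (Φop jq.1) jq.2 = γ ℓ)).card = r ℓ)
    (hblock : ∀ ℓ : Fin p, (ℓ : ℕ) + 1 < p →
      (r ℓ : ℝ) * γ ℓ =
        ∑ i ∈ Finset.univ.filter (fun i : Fin n =>
          g ℓ.castSucc ≤ (i : ℕ) ∧ (i : ℕ) < g ℓ.succ), α i)
    (Φ : (j : Fin m) → Fin n → Fin (d j) → ℂ)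
    (hΦ : ∀ i, (∑ j, sqNorm (Φ j i)) = α i) :
    MajF (fun jq : Σ j : Fin m, Fin (d j) => spec (Φop jq.1) jq.2)
         (fun jq : Σ j : Fin m, Fin (d j) => spec (Φ jq.1) jq.2) := by
  refine majF_of_partialSum_le_ksum (fun s => spec_nonneg _ _)
    ((sum_spec_sigma hop).trans (sum_spec_sigma hΦ).symm) hγ (fun ℓ => (hγ0 ℓ).le) r hspec hcount
    fun ℓ => ?_
  have hstep : ∀ ℓ : Fin p, g ℓ.castSucc ≤ g ℓ.succ := fun ℓ => (hgmono ℓ.castSucc_lt_succ).le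
  have hR : Fin.partialSum r ℓ.castSucc = ∑ j, min (g ℓ.castSucc) (d j) :=
    Fin.partialSum_eq_of_succ (f := fun L => ∑ j, min (g L) (d j)) (by simp [hg0]) fun ℓ' _ => by
      rw [hr, ← sum_add_distrib]
      exact sum_congr rfl fun j _ => by have := hstep ℓ'; omega
  have hC : Fin.partialSum (fun ℓ => (r ℓ : ℝ) * γ ℓ) ℓ.castSucc
      = ∑ i ∈ univ.filter (fun i : Fin n => (i : ℕ) < g ℓ.castSucc), α i :=
    Fin.partialSum_eq_of_succ
      (f := fun L => ∑ i ∈ univ.filter (fun i : Fin n => (i : ℕ) < g L), α i) (by simp [hg0])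
      fun ℓ' hℓ' => by
        rw [Fin.le_def, Fin.val_succ, Fin.val_castSucc] at hℓ'
        rw [hblock ℓ' (by omega), sum_filter_val_lt_add α (hstep ℓ')]
  rw [hR, hC]
  exact sum_le_ksum_spec_sigma hΦ _ (Fin.card_filter_val_lt.trans_le (min_le_right _ _))
end
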